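/- arXiv:2208.10635 — 6 statements merged into one kernel-verified Lean document; each statement's English description precedes it below -/
import Mathlib

section
/- Let μ be a Borel probability measure on ℝ with finite first moment and let f : (0,1) → ℝ be a measurable map such that the image of Lebesgue measure λ on (0,1) under f equals μ. Then for every v ∈ [0,1], ∫_v^1 f(u) du ≤ ∫_v^1 F_μ^{-1}(u) du. -/
open MeasureTheory Filter Set

noncomputable section

/-- The quantile function of a measure `μ` on `ℝ`:
`F_μ^{-1}(u) = inf {x : μ((-∞, x]) ≥ u}`. -/
def quantile (μ : Measure ℝ) (u : ℝ) : ℝ :=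
  sInf {x : ℝ | u ≤ (μ (Iic x)).toReal}

/-- The `p`-Wasserstein distance on the real line, expressed via quantile functions. -/
def Wp (p : ℝ) (μ ν : Measure ℝ) : ℝ :=
  (∫ u in Ioo (0:ℝ) 1, |quantile μ u - quantile ν u| ^ p) ^ (1 / p)

/-- `μ ∈ P_p(ℝ)`: a Borel probability measure on `ℝ` with finite `p`-th moment. -/
def MemPp (p : ℝ) (μ : Measure ℝ) : Prop :=
  IsProbabilityMeasure μ ∧ Integrable (fun x => |x| ^ p) μ

/-- The convex hull of a function `F` on a set `S`: the greatest convex function on `S`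
bounded above by `F` (pointwise supremum of all convex minorants). -/
def convexHullFn (S : Set ℝ) (F : ℝ → ℝ) : ℝ → ℝ :=
  fun x => sSup {y : ℝ | ∃ g : ℝ → ℝ, ConvexOn ℝ S g ∧ (∀ z ∈ S, g z ≤ F z) ∧ y = g x}

/-- Left-hand derivative. -/
def leftDeriv (f : ℝ → ℝ) (x : ℝ) : ℝ := derivWithin f (Iio x) x

/-- Right-hand derivative. -/
def rightDeriv (f : ℝ → ℝ) (x : ℝ) : ℝ := derivWithin f (Ioi x) x

/-- `G(v) = ∫₀^v (F_μ^{-1}(u) - F_ν^{-1}(u)) du`. -/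
def Gfun (μ ν : Measure ℝ) (v : ℝ) : ℝ :=
  ∫ u in Ioo (0:ℝ) v, (quantile μ u - quantile ν u)

/-- The Wasserstein projection `I(μ,ν)`: the image of Lebesgue measure on `(0,1)` under
`u ↦ F_μ^{-1}(u) - ∂₋ co(G)(u)`. -/
def proj_I (μ ν : Measure ℝ) : Measure ℝ :=
  Measure.map
    (fun u => quantile μ u - leftDeriv (convexHullFn (Icc 0 1) (Gfun μ ν)) u)
    (volume.restrict (Ioo (0:ℝ) 1))

/-- The Wasserstein projection `J(μ,ν)`: the image of Lebesgue measure on `(0,1)` under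
`u ↦ F_ν^{-1}(u) + ∂₋ co(G)(u)`. -/
def proj_J (μ ν : Measure ℝ) : Measure ℝ :=
  Measure.map
    (fun u => quantile ν u + leftDeriv (convexHullFn (Icc 0 1) (Gfun μ ν)) u)
    (volume.restrict (Ioo (0:ℝ) 1))

/-- The convex order `μ ≤_c ν`. -/
def ConvexOrder (μ ν : Measure ℝ) : Prop :=
  ∀ f : ℝ → ℝ, ConvexOn ℝ univ f → Integrable f μ → Integrable f ν →
    ∫ x, f x ∂μ ≤ ∫ x, f x ∂ν

/-- `f` is càdlàg on `[a,b]`: right-continuous on `[a,b)` and with left limits on `(a,b]`. -/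
def Cadlag (f : ℝ → ℝ) (a b : ℝ) : Prop :=
  (∀ x ∈ Ico a b, Tendsto f (nhdsWithin x (Ici x)) (nhds (f x))) ∧
  (∀ x ∈ Ioc a b, ∃ l : ℝ, Tendsto f (nhdsWithin x (Iio x)) (nhds l))

/-!
Let `q = F_μ^{-1}(v)`. Pointwise `x ≤ (x - q)⁺ + q` and `(f - q)⁺ ≥ 0`, so
`∫_v^1 f ≤ ∫_0^1 (f - q)⁺ + (1 - v) q`. The right-hand side depends only on the law `μ` of
`f`, so it does not change when `f` is replaced by `F_μ^{-1}`, which also pushes `λ` forward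
to `μ`; and for the nondecreasing `F_μ^{-1}` the inequality is an equality, since
`F_μ^{-1} ≤ q` on `(0, v]` and `F_μ^{-1} ≥ q` on `(v, 1)`.
-/

namespace ProbabilityTheory

section Quantile

variable {μ : Measure ℝ} [IsProbabilityMeasure μ] {u x : ℝ}

lemma quantile_eq_sInf_cdf (μ : Measure ℝ) [IsProbabilityMeasure μ] (u : ℝ) :
    quantile μ u = sInf {x : ℝ | u ≤ cdf μ x} := by
  simp only [quantile, cdf_eq_real, measureReal_def]

omit [IsProbabilityMeasure μ] in
lemma nonempty_setOf_le_cdf (hu : u < 1) : {x : ℝ | u ≤ cdf μ x}.Nonempty :=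
  ((tendsto_cdf_atTop μ).eventually_const_le hu).exists

omit [IsProbabilityMeasure μ] in
lemma bddBelow_setOf_le_cdf (hu : 0 < u) : BddBelow {x : ℝ | u ≤ cdf μ x} := by
  obtain ⟨a, ha⟩ := eventually_atBot.mp ((tendsto_cdf_atBot μ).eventually_lt_const hu)
  exact ⟨a, fun x hx => le_of_not_gt fun hxa => (ha x hxa.le).not_ge hx⟩

lemma le_cdf_quantile (hu0 : 0 < u) (hu1 : u < 1) : u ≤ cdf μ (quantile μ u) := by
  rw [quantile_eq_sInf_cdf]
  have h_above : ∀ x ∈ Ioi (sInf {x : ℝ | u ≤ cdf μ x}), u ≤ cdf μ x := by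
    intro x hx
    obtain ⟨s, hs, hsx⟩ :=
      (csInf_lt_iff (bddBelow_setOf_le_cdf hu0) (nonempty_setOf_le_cdf hu1)).mp hx
    exact hs.trans ((cdf μ).mono hsx.le)
  have h_right_cont := (cdf μ).right_continuous (sInf {x : ℝ | u ≤ cdf μ x})
  exact ge_of_tendsto (h_right_cont.mono_left (nhdsWithin_mono _ Ioi_subset_Ici_self))
    (eventually_nhdsWithin_of_forall h_above)

lemma quantile_le_iff_le_cdf (hu0 : 0 < u) (hu1 : u < 1) : quantile μ u ≤ x ↔ u ≤ cdf μ x :=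
  ⟨fun h => (le_cdf_quantile hu0 hu1).trans ((cdf μ).mono h),
    fun h => (quantile_eq_sInf_cdf μ u).trans_le (csInf_le (bddBelow_setOf_le_cdf hu0) h)⟩

lemma monotoneOn_quantile : MonotoneOn (quantile μ) (Ioo 0 1) := by
  intro u hu u' hu' huu'
  rw [quantile_eq_sInf_cdf, quantile_eq_sInf_cdf]
  exact csInf_le_csInf (bddBelow_setOf_le_cdf hu.1) (nonempty_setOf_le_cdf hu'.2)
    fun x hx => huu'.trans hx

lemma aemeasurable_quantile : AEMeasurable (quantile μ) (volume.restrict (Ioo 0 1)) :=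
  aemeasurable_restrict_of_monotoneOn measurableSet_Ioo monotoneOn_quantile

end Quantile

lemma volume_Iic_inter_Ioo_zero_one {c : ℝ} (hc1 : c ≤ 1) :
    volume (Iic c ∩ Ioo 0 1) = ENNReal.ofReal c := by
  refine le_antisymm ?_ ?_
  · calc volume (Iic c ∩ Ioo 0 1) ≤ volume (Ioc 0 c) :=
          measure_mono fun u hu => ⟨hu.2.1, hu.1⟩
      _ = ENNReal.ofReal c := by rw [Real.volume_Ioc, sub_zero]
  · calc ENNReal.ofReal c = volume (Ioo 0 c) := by rw [Real.volume_Ioo, sub_zero]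
      _ ≤ volume (Iic c ∩ Ioo 0 1) :=
        measure_mono fun u hu => ⟨hu.2.le, hu.1, hu.2.trans_le hc1⟩

theorem map_quantile_volume_Ioo (μ : Measure ℝ) [IsProbabilityMeasure μ] :
    (volume.restrict (Ioo 0 1)).map (quantile μ) = μ := by
  refine Measure.ext_of_Iic _ _ fun x => ?_
  rw [Measure.map_apply_of_aemeasurable aemeasurable_quantile measurableSet_Iic,
    Measure.restrict_apply' measurableSet_Ioo]
  have h_preimage : quantile μ ⁻¹' Iic x ∩ Ioo 0 1 = Iic (cdf μ x) ∩ Ioo 0 1 := by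
    ext u
    simp only [mem_inter_iff, mem_preimage, mem_Iic, and_congr_left_iff]
    exact fun hu => quantile_le_iff_le_cdf hu.1 hu.2
  rw [h_preimage, volume_Iic_inter_Ioo_zero_one (cdf_le_one μ x), ofReal_cdf]

section Rearrangement

variable {f g : ℝ → ℝ} {v : ℝ}

lemma setIntegral_Ioo_const_of_le (hv : v ≤ 1) (c : ℝ) : ∫ _ in Ioo v 1, c = (1 - v) * c := by
  rw [setIntegral_const, Real.volume_real_Ioo_of_le hv, smul_eq_mul]

lemma setIntegral_Ioo_le_integral_posPart_add (hf : IntegrableOn f (Ioo 0 1)) (hv : v ∈ Icc 0 1)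
    (q : ℝ) :
    ∫ u in Ioo v 1, f u ≤ (∫ u in Ioo 0 1, max (f u - q) 0) + (1 - v) * q := by
  have hsub : Ioo v 1 ⊆ Ioo 0 1 := Ioo_subset_Ioo_left hv.1
  have hpos : IntegrableOn (fun u => max (f u - q) 0) (Ioo 0 1) :=
    (hf.sub (integrableOn_const measure_Ioo_lt_top.ne)).pos_part
  calc ∫ u in Ioo v 1, f u ≤ ∫ u in Ioo v 1, (max (f u - q) 0 + q) :=
        integral_mono (hf.mono_set hsub)
          ((hpos.mono_set hsub).add (integrableOn_const measure_Ioo_lt_top.ne))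
          fun u => by linarith [le_max_left (f u - q) 0]
    _ = (∫ u in Ioo v 1, max (f u - q) 0) + (1 - v) * q := by
        rw [integral_add (hpos.mono_set hsub) (integrableOn_const measure_Ioo_lt_top.ne),
          setIntegral_Ioo_const_of_le hv.2]
    _ ≤ (∫ u in Ioo 0 1, max (f u - q) 0) + (1 - v) * q := by
        grw [setIntegral_mono_set hpos (.of_forall fun u => le_max_right _ _) hsub.eventuallyLE]

lemma setIntegral_Ioo_eq_integral_posPart_add_of_monotoneOn (hg : IntegrableOn g (Ioo 0 1))
    (hmono : MonotoneOn g (Ioo 0 1)) (hv : v ∈ Ioo 0 1) :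
    ∫ u in Ioo v 1, g u = (∫ u in Ioo 0 1, max (g u - g v) 0) + (1 - v) * g v := by
  have hsub : Ioo v 1 ⊆ Ioo 0 1 := Ioo_subset_Ioo_left hv.1.le
  have h_indicator : EqOn (fun u => max (g u - g v) 0) ((Ioo v 1).indicator fun u => g u - g v)
      (Ioo 0 1) := by
    intro u hu
    by_cases huv : v < u
    · rw [indicator_of_mem (show u ∈ Ioo v 1 from ⟨huv, hu.2⟩)]
      exact max_eq_left (sub_nonneg.mpr (hmono hv hu huv.le))
    · rw [indicator_of_notMem fun h => huv h.1]
      exact max_eq_right (sub_nonpos.mpr (hmono hu hv (not_lt.mp huv)))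
  rw [setIntegral_congr_fun measurableSet_Ioo h_indicator, setIntegral_indicator measurableSet_Ioo,
    inter_eq_right.mpr hsub, integral_sub (hg.mono_set hsub)
      (integrableOn_const measure_Ioo_lt_top.ne), setIntegral_Ioo_const_of_le hv.2.le]
  ring

theorem setIntegral_Ioo_le_of_identDistrib_of_monotoneOn
    (hfg : IdentDistrib f g (volume.restrict (Ioo 0 1)) (volume.restrict (Ioo 0 1)))
    (hf : IntegrableOn f (Ioo 0 1)) (hmono : MonotoneOn g (Ioo 0 1)) (hv : v ∈ Icc 0 1) :
    ∫ u in Ioo v 1, f u ≤ ∫ u in Ioo v 1, g u := by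
  obtain rfl | hv1 := hv.2.eq_or_lt
  · simp
  obtain rfl | hv0 := hv.1.eq_or_lt
  · exact hfg.integral_eq.le
  have hg : IntegrableOn g (Ioo 0 1) := hfg.integrable_iff.mp hf
  have h_posPart : ∫ u in Ioo 0 1, max (f u - g v) 0 = ∫ u in Ioo 0 1, max (g u - g v) 0 :=
    (hfg.comp (u := fun x => max (x - g v) 0) (by fun_prop)).integral_eq
  calc ∫ u in Ioo v 1, f u ≤ (∫ u in Ioo 0 1, max (f u - g v) 0) + (1 - v) * g v :=
        setIntegral_Ioo_le_integral_posPart_add hf hv _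
    _ = ∫ u in Ioo v 1, g u := by
        rw [h_posPart,
          setIntegral_Ioo_eq_integral_posPart_add_of_monotoneOn hg hmono ⟨hv0, hv1⟩]

end Rearrangement

end ProbabilityTheory

open ProbabilityTheory in
/-- if `f` pushes Lebesgue measure on `(0,1)` forward to `μ` (with finite first
moment), then `∫_v^1 f(u) du ≤ ∫_v^1 F_μ^{-1}(u) du` for all `v ∈ [0,1]`. -/
theorem quantile_increasing_ordering (μ : Measure ℝ) [IsProbabilityMeasure μ]
    (hmom : Integrable (fun x => |x|) μ)
    (f : ℝ → ℝ) (hmeas : Measurable f)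
    (hmap : Measure.map f (volume.restrict (Ioo (0:ℝ) 1)) = μ) :
    ∀ v ∈ Icc (0:ℝ) 1,
      (∫ u in Ioo v 1, f u) ≤ ∫ u in Ioo v 1, quantile μ u := by
  have h_law : IdentDistrib f (quantile μ) (volume.restrict (Ioo 0 1))
      (volume.restrict (Ioo 0 1)) :=
    ⟨hmeas.aemeasurable, aemeasurable_quantile, hmap.trans (map_quantile_volume_Ioo μ).symm⟩
  have h_mean : Integrable id μ := (integrable_norm_iff aestronglyMeasurable_id).mp hmom
  have hf : IntegrableOn f (Ioo 0 1) :=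
    (integrable_map_measure aestronglyMeasurable_id hmeas.aemeasurable).mp (hmap ▸ h_mean)
  exact fun _ => setIntegral_Ioo_le_of_identDistrib_of_monotoneOn h_law hf monotoneOn_quantile

end
end

section
/- Let p ∈ [1,∞) and μ, ν ∈ P_p(ℝ). Then W_p(I(μ,ν), μ) = W_p(J(μ,ν), ν) and W_p(I(μ,ν), ν) = W_p(J(μ,ν), μ). -/
open MeasureTheory Filter Set

noncomputable section

open Topology ENNReal

namespace ProjAux

lemma F_mono (μ : Measure ℝ) [IsFiniteMeasure μ] :
    Monotone fun x : ℝ => (μ (Iic x)).toReal := fun _ _ hab =>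
  ENNReal.toReal_mono (measure_ne_top μ _) (measure_mono (Iic_subset_Iic.2 hab))

lemma exists_F_ge (μ : Measure ℝ) [IsProbabilityMeasure μ] {u : ℝ} (hu : u < 1) :
    ∃ x : ℝ, u ≤ (μ (Iic x)).toReal := by
  have h := tendsto_measure_Iic_atTop μ
  rw [measure_univ] at h
  have h2 : Tendsto (fun x : ℝ => (μ (Iic x)).toReal) atTop (𝓝 1) := by
    have := (ENNReal.tendsto_toReal (by norm_num : (1:ℝ≥0∞) ≠ ⊤)).comp h
    simpa [Function.comp_def] using this
  exact (h2.eventually (eventually_ge_nhds hu)).exists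

lemma exists_F_lt (μ : Measure ℝ) [IsProbabilityMeasure μ] {u : ℝ} (hu : 0 < u) :
    ∃ x : ℝ, (μ (Iic x)).toReal < u := by
  have hanti : Antitone (fun n : ℕ => Iic (-(n:ℝ))) := fun i j hij =>
    Iic_subset_Iic.2 (by exact_mod_cast neg_le_neg (by exact_mod_cast hij))
  have h : Tendsto (fun n : ℕ => μ (Iic (-(n:ℝ)))) atTop
      (𝓝 (μ (⋂ n : ℕ, Iic (-(n:ℝ))))) := by
    have := tendsto_measure_iInter_atTop (μ := μ) (fun n => (measurableSet_Iic).nullMeasurableSet)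
      hanti ⟨0, measure_ne_top _ _⟩
    exact this
  have hempty : (⋂ n : ℕ, Iic (-(n:ℝ))) = ∅ := by
    ext x
    simp only [mem_iInter, mem_Iic, mem_empty_iff_false, iff_false, not_forall, not_le]
    obtain ⟨n, hn⟩ := exists_nat_gt (-x)
    exact ⟨n, by linarith⟩
  rw [hempty, measure_empty] at h
  have h2 : Tendsto (fun n : ℕ => (μ (Iic (-(n:ℝ)))).toReal) atTop (𝓝 0) := by
    have := (ENNReal.tendsto_toReal (by norm_num : (0:ℝ≥0∞) ≠ ⊤)).comp h
    simpa [Function.comp_def] using this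
  obtain ⟨n, hn⟩ := (h2.eventually (eventually_lt_nhds hu)).exists
  exact ⟨-(n:ℝ), hn⟩

lemma quantile_set_nonempty (μ : Measure ℝ) [IsProbabilityMeasure μ] {u : ℝ} (hu : u < 1) :
    {x : ℝ | u ≤ (μ (Iic x)).toReal}.Nonempty := exists_F_ge μ hu

lemma quantile_set_bddBelow (μ : Measure ℝ) [IsProbabilityMeasure μ] {u : ℝ} (hu : 0 < u) :
    BddBelow {x : ℝ | u ≤ (μ (Iic x)).toReal} := by
  obtain ⟨y, hy⟩ := exists_F_lt μ hu
  refine ⟨y, fun x hx => ?_⟩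
  by_contra hxy
  push_neg at hxy
  exact absurd (le_trans hx (F_mono μ hxy.le)) (not_le.2 hy)

lemma le_F_quantile (μ : Measure ℝ) [IsProbabilityMeasure μ] {u : ℝ} (h0 : 0 < u) (h1 : u < 1) :
    u ≤ (μ (Iic (quantile μ u))).toReal := by
  set q := quantile μ u with hq
  have hne := quantile_set_nonempty μ h1
  have hseq : Tendsto (fun n : ℕ => μ (Iic (q + 1/((n:ℝ)+1)))) atTop
      (𝓝 (μ (⋂ n : ℕ, Iic (q + 1/((n:ℝ)+1))))) := by
    refine tendsto_measure_iInter_atTop (fun n => (measurableSet_Iic).nullMeasurableSet)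
      (fun i j hij => Iic_subset_Iic.2 ?_) ⟨0, measure_ne_top _ _⟩
    have hc : (i:ℝ) ≤ (j:ℝ) := Nat.cast_le.2 hij
    have : 1/((j:ℝ)+1) ≤ 1/((i:ℝ)+1) := by
      apply one_div_le_one_div_of_le
      · positivity
      · linarith
    linarith
  have hiInter : (⋂ n : ℕ, Iic (q + 1/((n:ℝ)+1))) = Iic q := by
    ext x
    simp only [mem_iInter, mem_Iic]
    constructor
    · intro h
      by_contra hx
      push_neg at hx
      obtain ⟨n, hn⟩ := exists_nat_one_div_lt (show (0:ℝ) < x - q by linarith)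
      have := h n
      linarith
    · intro h n
      have : (0:ℝ) < 1/((n:ℝ)+1) := by positivity
      linarith
  rw [hiInter] at hseq
  have hterm : ∀ n : ℕ, ENNReal.ofReal u ≤ μ (Iic (q + 1/((n:ℝ)+1))) := by
    intro n
    have hlt : q < q + 1/((n:ℝ)+1) := by
      have : (0:ℝ) < 1/((n:ℝ)+1) := by positivity
      linarith
    obtain ⟨x, hx, hxlt⟩ := exists_lt_of_csInf_lt hne hlt
    have : u ≤ (μ (Iic (q + 1/((n:ℝ)+1)))).toReal := le_trans hx (F_mono μ hxlt.le)
    rwa [ENNReal.ofReal_le_iff_le_toReal (measure_ne_top _ _)]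
  have : ENNReal.ofReal u ≤ μ (Iic q) := ge_of_tendsto hseq (Eventually.of_forall hterm)
  rwa [ENNReal.ofReal_le_iff_le_toReal (measure_ne_top _ _)] at this

lemma quantile_le_iff (μ : Measure ℝ) [IsProbabilityMeasure μ] {u x : ℝ}
    (h0 : 0 < u) (h1 : u < 1) :
    quantile μ u ≤ x ↔ u ≤ (μ (Iic x)).toReal := by
  constructor
  · intro h
    exact le_trans (le_F_quantile μ h0 h1) (F_mono μ h)
  · intro h
    exact csInf_le (quantile_set_bddBelow μ h0) h

lemma quantile_monotoneOn (μ : Measure ℝ) [IsProbabilityMeasure μ] :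
    MonotoneOn (quantile μ) (Ioo 0 1) := by
  intro u hu v hv huv
  exact csInf_le_csInf (quantile_set_bddBelow μ hu.1) (quantile_set_nonempty μ hv.2)
    (fun x hx => le_trans huv hx)

lemma quantile_no_gap (μ : Measure ℝ) [IsProbabilityMeasure μ] {u ε : ℝ}
    (h0 : 0 < u) (h1 : u < 1) (hε : 0 < ε) :
    ∃ t ∈ Ioo (0:ℝ) u, quantile μ u - ε < quantile μ t := by
  by_contra h
  push_neg at h
  have key : ∀ t ∈ Ioo (0:ℝ) u, t ≤ (μ (Iic (quantile μ u - ε))).toReal := fun t ht =>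
    (quantile_le_iff μ ht.1 (ht.2.trans h1)).1 (h t ht)
  have hcu : u ≤ (μ (Iic (quantile μ u - ε))).toReal := by
    by_contra hc
    push_neg at hc
    set c := (μ (Iic (quantile μ u - ε))).toReal with hcdef
    have hc0 : 0 ≤ c := ENNReal.toReal_nonneg
    have hmem : max (u/2) ((c+u)/2) ∈ Ioo (0:ℝ) u := by
      constructor
      · exact lt_of_lt_of_le (by linarith) (le_max_left _ _)
      · apply max_lt <;> linarith
    have hle := key _ hmem
    have : (c+u)/2 ≤ c := le_trans (le_max_right _ _) hle
    linarith
  have := (quantile_le_iff μ h0 h1).2 hcu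
  linarith


lemma map_quantile (μ : Measure ℝ) [IsProbabilityMeasure μ] :
    Measure.map (quantile μ) (volume.restrict (Ioo (0:ℝ) 1)) = μ := by
  have hmono : MonotoneOn (quantile μ) (Ioo 0 1) := quantile_monotoneOn μ
  have hae : AEMeasurable (quantile μ) (volume.restrict (Ioo (0:ℝ) 1)) :=
    aemeasurable_restrict_of_monotoneOn measurableSet_Ioo hmono
  haveI : IsProbabilityMeasure (volume.restrict (Ioo (0:ℝ) 1)) :=
    ⟨by simp [Real.volume_Ioo]⟩
  haveI : IsProbabilityMeasure (Measure.map (quantile μ) (volume.restrict (Ioo (0:ℝ) 1))) :=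
    Measure.isProbabilityMeasure_map hae
  refine Measure.ext_of_Iic _ _ (fun x => ?_)
  rw [Measure.map_apply_of_aemeasurable hae measurableSet_Iic,
      Measure.restrict_apply' measurableSet_Ioo]
  set c := (μ (Iic x)).toReal with hc
  have hc0 : 0 ≤ c := ENNReal.toReal_nonneg
  have hc1 : c ≤ 1 := by
    rw [hc]
    have : μ (Iic x) ≤ 1 := prob_le_one
    calc (μ (Iic x)).toReal ≤ (1:ℝ≥0∞).toReal :=
          ENNReal.toReal_mono (by norm_num) this
      _ = 1 := by simp
  have hset : quantile μ ⁻¹' Iic x ∩ Ioo 0 1 = Ioo 0 1 ∩ Iic c := by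
    ext u
    simp only [mem_inter_iff, mem_preimage, mem_Iic, mem_Ioo]
    constructor
    · rintro ⟨h1, h2⟩
      exact ⟨h2, (quantile_le_iff μ h2.1 h2.2).1 h1⟩
    · rintro ⟨h1, h2⟩
      exact ⟨(quantile_le_iff μ h1.1 h1.2).2 h2, h1⟩
  rw [hset]
  have hμx : μ (Iic x) = ENNReal.ofReal c := by
    rw [hc, ENNReal.ofReal_toReal (measure_ne_top _ _)]
  rw [hμx]
  rcases lt_or_eq_of_le hc1 with h | h
  · have : Ioo (0:ℝ) 1 ∩ Iic c = Ioc 0 c := by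
      ext u
      simp only [mem_inter_iff, mem_Ioo, mem_Iic, mem_Ioc]
      constructor
      · rintro ⟨⟨h1, _⟩, h3⟩; exact ⟨h1, h3⟩
      · rintro ⟨h1, h2⟩; exact ⟨⟨h1, lt_of_le_of_lt h2 h⟩, h2⟩
    rw [this, Real.volume_Ioc, sub_zero]
  · have : Ioo (0:ℝ) 1 ∩ Iic c = Ioo 0 1 := by
      rw [inter_eq_left]
      intro u hu
      rw [mem_Iic, h]
      exact hu.2.le
    rw [this, Real.volume_Ioo, sub_zero, ← h]

lemma abs_le_one_add_abs_rpow {p : ℝ} (hp : 1 ≤ p) (a : ℝ) : |a| ≤ |a| ^ p + 1 := by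
  rcases le_or_gt (|a|) 1 with h | h
  · have : (0:ℝ) ≤ |a| ^ p := Real.rpow_nonneg (abs_nonneg a) p
    linarith
  · have h1 : |a| = |a| ^ (1:ℝ) := (Real.rpow_one _).symm
    have h2 : |a| ^ (1:ℝ) ≤ |a| ^ p := Real.rpow_le_rpow_of_exponent_le h.le hp
    calc |a| = |a| ^ (1:ℝ) := h1
      _ ≤ |a| ^ p := h2
      _ ≤ |a| ^ p + 1 := by linarith

lemma integrableOn_quantile {p : ℝ} (hp : 1 ≤ p) (μ : Measure ℝ) [IsProbabilityMeasure μ]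
    (hμ : Integrable (fun x => |x| ^ p) μ) :
    IntegrableOn (quantile μ) (Ioo 0 1) := by
  have hmono : MonotoneOn (quantile μ) (Ioo 0 1) := quantile_monotoneOn μ
  have hae : AEMeasurable (quantile μ) (volume.restrict (Ioo (0:ℝ) 1)) :=
    aemeasurable_restrict_of_monotoneOn measurableSet_Ioo hmono
  have hmap := map_quantile μ
  have h1 : Integrable (fun u => |quantile μ u| ^ p) (volume.restrict (Ioo (0:ℝ) 1)) := by
    have hμ' : Integrable (fun x => |x| ^ p)
        (Measure.map (quantile μ) (volume.restrict (Ioo (0:ℝ) 1))) := by rwa [hmap]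
    have := (integrable_map_measure (hμ'.aestronglyMeasurable) hae).1 hμ'
    exact this
  refine Integrable.mono' (h1.add (integrable_const 1)) hae.aestronglyMeasurable ?_
  refine ae_of_all _ (fun u => ?_)
  rw [Real.norm_eq_abs]
  exact abs_le_one_add_abs_rpow hp _


section GfunSec

variable {μ ν : Measure ℝ}

lemma G_Ioc (μ ν : Measure ℝ) (v : ℝ) :
    Gfun μ ν v = ∫ u in Ioc (0:ℝ) v, (quantile μ u - quantile ν u) :=
  (integral_Ioc_eq_integral_Ioo).symm

lemma G_integrableOn_Icc
    (hg : IntegrableOn (fun u => quantile μ u - quantile ν u) (Ioo 0 1)) :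
    IntegrableOn (fun u => quantile μ u - quantile ν u) (Icc 0 1) := by
  rwa [integrableOn_Icc_iff_integrableOn_Ioo]

lemma G_continuousOn
    (hg : IntegrableOn (fun u => quantile μ u - quantile ν u) (Ioo 0 1)) :
    ContinuousOn (Gfun μ ν) (Icc 0 1) := by
  have h := intervalIntegral.continuousOn_primitive (f := fun u => quantile μ u - quantile ν u)
    (a := (0:ℝ)) (b := 1) (μ := volume) (G_integrableOn_Icc hg)
  exact h.congr (fun v _ => G_Ioc μ ν v)

lemma G_diff (hg : IntegrableOn (fun u => quantile μ u - quantile ν u) (Ioo 0 1))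
    {s t : ℝ} (hs : s ∈ Icc (0:ℝ) 1) (ht : t ∈ Icc (0:ℝ) 1) (hst : s ≤ t) :
    Gfun μ ν t - Gfun μ ν s = ∫ u in Ioo s t, (quantile μ u - quantile ν u) := by
  have hIcc := G_integrableOn_Icc hg
  have h1 : IntegrableOn (fun u => quantile μ u - quantile ν u) (Ioc 0 s) :=
    hIcc.mono_set (Ioc_subset_Icc_self.trans (Icc_subset_Icc le_rfl hs.2))
  have h2 : IntegrableOn (fun u => quantile μ u - quantile ν u) (Ioc s t) :=
    hIcc.mono_set (fun w hw => ⟨le_trans hs.1 hw.1.le, le_trans hw.2 ht.2⟩)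
  have hu : Ioc (0:ℝ) s ∪ Ioc s t = Ioc 0 t := Ioc_union_Ioc_eq_Ioc hs.1 hst
  rw [G_Ioc, G_Ioc, ← hu,
    setIntegral_union (Ioc_disjoint_Ioc_of_le le_rfl) measurableSet_Ioc h1 h2,
    ← integral_Ioc_eq_integral_Ioo]
  ring

lemma G_slope_upper [IsProbabilityMeasure μ] [IsProbabilityMeasure ν]
    (hg : IntegrableOn (fun u => quantile μ u - quantile ν u) (Ioo 0 1))
    {s t : ℝ} (hs : s ∈ Ioo (0:ℝ) 1) (ht : t ∈ Ioo (0:ℝ) 1) (hst : s < t) :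
    Gfun μ ν t - Gfun μ ν s ≤ (quantile μ t - quantile ν s) * (t - s) := by
  rw [G_diff hg ⟨hs.1.le, hs.2.le⟩ ⟨ht.1.le, ht.2.le⟩ hst.le]
  have hb : ∀ w ∈ Ioo s t, quantile μ w - quantile ν w ≤ quantile μ t - quantile ν s := by
    intro w hw
    have hwm : w ∈ Ioo (0:ℝ) 1 := ⟨hs.1.trans hw.1, hw.2.trans ht.2⟩
    have h1 := quantile_monotoneOn μ hwm ht hw.2.le
    have h2 := quantile_monotoneOn ν hs hwm hw.1.le
    linarith
  calc (∫ u in Ioo s t, (quantile μ u - quantile ν u))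
      ≤ ∫ _ in Ioo s t, (quantile μ t - quantile ν s) := by
        refine setIntegral_mono_on (hg.mono_set ?_) (integrableOn_const (by rw [Real.volume_Ioo]; exact ENNReal.ofReal_ne_top))
          measurableSet_Ioo hb
        · exact fun w hw => ⟨hs.1.trans hw.1, hw.2.trans ht.2⟩
    _ = (quantile μ t - quantile ν s) * (t - s) := by
        rw [setIntegral_const, measureReal_def, Real.volume_Ioo, smul_eq_mul,
          ENNReal.toReal_ofReal (by linarith), mul_comm]

lemma G_slope_lower [IsProbabilityMeasure μ] [IsProbabilityMeasure ν]
    (hg : IntegrableOn (fun u => quantile μ u - quantile ν u) (Ioo 0 1))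
    {s t : ℝ} (hs : s ∈ Ioo (0:ℝ) 1) (ht : t ∈ Ioo (0:ℝ) 1) (hst : s < t) :
    (quantile μ s - quantile ν t) * (t - s) ≤ Gfun μ ν t - Gfun μ ν s := by
  rw [G_diff hg ⟨hs.1.le, hs.2.le⟩ ⟨ht.1.le, ht.2.le⟩ hst.le]
  have hb : ∀ w ∈ Ioo s t, quantile μ s - quantile ν t ≤ quantile μ w - quantile ν w := by
    intro w hw
    have hwm : w ∈ Ioo (0:ℝ) 1 := ⟨hs.1.trans hw.1, hw.2.trans ht.2⟩
    have h1 := quantile_monotoneOn μ hs hwm hw.1.le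
    have h2 := quantile_monotoneOn ν hwm ht hw.2.le
    linarith
  calc (quantile μ s - quantile ν t) * (t - s)
      = ∫ _ in Ioo s t, (quantile μ s - quantile ν t) := by
        rw [setIntegral_const, measureReal_def, Real.volume_Ioo, smul_eq_mul,
          ENNReal.toReal_ofReal (by linarith), mul_comm]
    _ ≤ ∫ u in Ioo s t, (quantile μ u - quantile ν u) := by
        refine setIntegral_mono_on (integrableOn_const (by rw [Real.volume_Ioo]; exact ENNReal.ofReal_ne_top)) (hg.mono_set ?_)
          measurableSet_Ioo hb
        · exact fun w hw => ⟨hs.1.trans hw.1, hw.2.trans ht.2⟩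

end GfunSec


section Hull

variable {F : ℝ → ℝ}

lemma hull_set_nonempty (m : ℝ) (hm : ∀ z ∈ Icc (0:ℝ) 1, m ≤ F z) (x : ℝ) :
    {y : ℝ | ∃ g : ℝ → ℝ, ConvexOn ℝ (Icc (0:ℝ) 1) g ∧ (∀ z ∈ Icc (0:ℝ) 1, g z ≤ F z)
      ∧ y = g x}.Nonempty :=
  ⟨m, fun _ => m, convexOn_const m (convex_Icc 0 1), fun z hz => hm z hz, rfl⟩

lemma hull_set_bddAbove {x : ℝ} (hx : x ∈ Icc (0:ℝ) 1) :
    BddAbove {y : ℝ | ∃ g : ℝ → ℝ, ConvexOn ℝ (Icc (0:ℝ) 1) g ∧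
      (∀ z ∈ Icc (0:ℝ) 1, g z ≤ F z) ∧ y = g x} := by
  refine ⟨F x, ?_⟩
  rintro y ⟨g, hg, hgF, rfl⟩
  exact hgF x hx

lemma le_hull {g : ℝ → ℝ} (hg : ConvexOn ℝ (Icc (0:ℝ) 1) g)
    (hgF : ∀ z ∈ Icc (0:ℝ) 1, g z ≤ F z) {x : ℝ} (hx : x ∈ Icc (0:ℝ) 1) :
    g x ≤ convexHullFn (Icc 0 1) F x :=
  le_csSup (hull_set_bddAbove hx) ⟨g, hg, hgF, rfl⟩

lemma hull_le (m : ℝ) (hm : ∀ z ∈ Icc (0:ℝ) 1, m ≤ F z) {x : ℝ} (hx : x ∈ Icc (0:ℝ) 1) :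
    convexHullFn (Icc 0 1) F x ≤ F x := by
  refine csSup_le (hull_set_nonempty m hm x) ?_
  rintro y ⟨g, hg, hgF, rfl⟩
  exact hgF x hx

lemma hull_convexOn (m : ℝ) (hm : ∀ z ∈ Icc (0:ℝ) 1, m ≤ F z) :
    ConvexOn ℝ (Icc (0:ℝ) 1) (convexHullFn (Icc 0 1) F) := by
  refine ⟨convex_Icc 0 1, fun x hx y hy a b ha hb hab => ?_⟩
  refine csSup_le (hull_set_nonempty m hm _) ?_
  rintro w ⟨g, hg, hgF, rfl⟩
  have h1 : a * g x ≤ a * convexHullFn (Icc 0 1) F x :=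
    mul_le_mul_of_nonneg_left (le_hull hg hgF hx) ha
  have h2 : b * g y ≤ b * convexHullFn (Icc 0 1) F y :=
    mul_le_mul_of_nonneg_left (le_hull hg hgF hy) hb
  have h3 := hg.2 hx hy ha hb hab
  simp only [smul_eq_mul] at h3 ⊢
  linarith

lemma hull_endpoint_zero (m : ℝ) (hm : ∀ z ∈ Icc (0:ℝ) 1, m ≤ F z) :
    convexHullFn (Icc 0 1) F 0 = F 0 := by
  set h : ℝ → ℝ := fun x => if x = 0 then F 0 else min m (F 0) with hdef
  have hmin_le : ∀ w : ℝ, min m (F 0) ≤ h w := by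
    intro w
    by_cases hw : w = 0
    · simp only [hdef, hw, if_pos rfl]
      exact min_le_right _ _
    · simp only [hdef, if_neg hw, le_refl]
  have h0 : h 0 = F 0 := by simp [hdef]
  have hconv : ConvexOn ℝ (Icc (0:ℝ) 1) h := by
    refine ⟨convex_Icc 0 1, fun x hx y hy a b ha hb hab => ?_⟩
    simp only [smul_eq_mul]
    by_cases hz : a * x + b * y = 0
    · rw [hz, h0]
      have hax : a * x = 0 ∧ b * y = 0 :=
        (add_eq_zero_iff_of_nonneg (mul_nonneg ha hx.1) (mul_nonneg hb hy.1)).1 hz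
      rcases mul_eq_zero.1 hax.1 with ha0 | hx0
      · -- a = 0, so b = 1, and y = 0
        have hb1 : b = 1 := by linarith
        have hy0 : y = 0 := by
          have := hax.2; rw [hb1, one_mul] at this; exact this
        rw [ha0, hb1, hy0, h0]; simp
      · rcases mul_eq_zero.1 hax.2 with hb0 | hy0
        · have ha1 : a = 1 := by linarith
          rw [hb0, ha1, hx0, h0]; simp
        · rw [hx0, hy0, h0]
          have : a * F 0 + b * F 0 = F 0 := by rw [← add_mul, hab, one_mul]
          linarith
    · have : h (a * x + b * y) = min m (F 0) := by simp [hdef, hz]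
      rw [this]
      have h1 : a * min m (F 0) ≤ a * h x := mul_le_mul_of_nonneg_left (hmin_le x) ha
      have h2 : b * min m (F 0) ≤ b * h y := mul_le_mul_of_nonneg_left (hmin_le y) hb
      have h3 : a * min m (F 0) + b * min m (F 0) = min m (F 0) := by
        rw [← add_mul, hab, one_mul]
      linarith
  have hminor : ∀ z ∈ Icc (0:ℝ) 1, h z ≤ F z := by
    intro z hz
    by_cases hz0 : z = 0
    · rw [hz0, h0]
    · simp only [hdef, if_neg hz0]
      exact le_trans (min_le_left _ _) (hm z hz)
  refine le_antisymm (hull_le m hm (left_mem_Icc.2 zero_le_one)) ?_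
  have := le_hull hconv hminor (left_mem_Icc.2 zero_le_one)
  rwa [h0] at this

lemma hull_endpoint_one (m : ℝ) (hm : ∀ z ∈ Icc (0:ℝ) 1, m ≤ F z) :
    convexHullFn (Icc 0 1) F 1 = F 1 := by
  set h : ℝ → ℝ := fun x => if x = 1 then F 1 else min m (F 1) with hdef
  have hmin_le : ∀ w : ℝ, min m (F 1) ≤ h w := by
    intro w
    by_cases hw : w = 1
    · simp only [hdef, if_pos hw]
      exact min_le_right _ _
    · simp only [hdef, if_neg hw, le_refl]
  have h1eq : h 1 = F 1 := by simp [hdef]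
  have hconv : ConvexOn ℝ (Icc (0:ℝ) 1) h := by
    refine ⟨convex_Icc 0 1, fun x hx y hy a b ha hb hab => ?_⟩
    simp only [smul_eq_mul]
    by_cases hz : a * x + b * y = 1
    · rw [hz, h1eq]
      have key : a * (1 - x) + b * (1 - y) = 0 := by
        have : a * (1 - x) + b * (1 - y) = (a + b) - (a * x + b * y) := by ring
        rw [this, hab, hz]; ring
      have hax : a * (1 - x) = 0 ∧ b * (1 - y) = 0 :=
        (add_eq_zero_iff_of_nonneg (mul_nonneg ha (by linarith [hx.2]))
          (mul_nonneg hb (by linarith [hy.2]))).1 key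
      rcases mul_eq_zero.1 hax.1 with ha0 | hx0
      · have hb1 : b = 1 := by linarith
        have hy0 : y = 1 := by
          have := hax.2; rw [hb1, one_mul] at this; linarith
        rw [ha0, hb1, hy0, h1eq]; simp
      · rcases mul_eq_zero.1 hax.2 with hb0 | hy0
        · have ha1 : a = 1 := by linarith
          have hx1 : x = 1 := by linarith
          rw [hb0, ha1, hx1, h1eq]; simp
        · have hy1 : y = 1 := by linarith
          have hx1 : x = 1 := by linarith
          rw [hx1, hy1, h1eq]
          have : a * F 1 + b * F 1 = F 1 := by rw [← add_mul, hab, one_mul]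
          linarith
    · have : h (a * x + b * y) = min m (F 1) := by simp [hdef, hz]
      rw [this]
      have h1 : a * min m (F 1) ≤ a * h x := mul_le_mul_of_nonneg_left (hmin_le x) ha
      have h2 : b * min m (F 1) ≤ b * h y := mul_le_mul_of_nonneg_left (hmin_le y) hb
      have h3 : a * min m (F 1) + b * min m (F 1) = min m (F 1) := by
        rw [← add_mul, hab, one_mul]
      linarith
  have hminor : ∀ z ∈ Icc (0:ℝ) 1, h z ≤ F z := by
    intro z hz
    by_cases hz1 : z = 1
    · rw [hz1, h1eq]
    · simp only [hdef, if_neg hz1]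
      exact le_trans (min_le_left _ _) (hm z hz)
  refine le_antisymm (hull_le m hm (right_mem_Icc.2 zero_le_one)) ?_
  have := le_hull hconv hminor (right_mem_Icc.2 zero_le_one)
  rwa [h1eq] at this

end Hull


section LeftDeriv

variable {f : ℝ → ℝ}

lemma slope_real (f : ℝ → ℝ) (a b : ℝ) : slope f a b = (f b - f a) / (b - a) := by
  rw [slope_def_field]

lemma slope_monoOn (hf : ConvexOn ℝ (Icc (0:ℝ) 1) f) {x : ℝ} (hx : x ∈ Ioo (0:ℝ) 1) :
    MonotoneOn (slope f x) (Ioo 0 x) := by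
  intro t ht t' ht' h
  rw [slope_real, slope_real]
  exact hf.secant_mono ⟨hx.1.le, hx.2.le⟩ ⟨ht.1.le, (ht.2.trans hx.2).le⟩
    ⟨ht'.1.le, (ht'.2.trans hx.2).le⟩ (ne_of_lt ht.2) (ne_of_lt ht'.2) h

lemma slope_le_slope_right (hf : ConvexOn ℝ (Icc (0:ℝ) 1) f) {x t v : ℝ}
    (hx : x ∈ Ioo (0:ℝ) 1) (ht : t ∈ Ioo (0:ℝ) x) (hv : v ∈ Ioc x 1) :
    slope f x t ≤ slope f x v := by
  rw [slope_real, slope_real]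
  exact hf.secant_mono ⟨hx.1.le, hx.2.le⟩ ⟨ht.1.le, (ht.2.trans hx.2).le⟩
    ⟨(hx.1.trans hv.1).le, hv.2⟩ (ne_of_lt ht.2) (ne_of_gt hv.1) (ht.2.trans hv.1).le

lemma slope_bddAbove (hf : ConvexOn ℝ (Icc (0:ℝ) 1) f) {x : ℝ} (hx : x ∈ Ioo (0:ℝ) 1) :
    BddAbove (slope f x '' Ioo 0 x) := by
  refine ⟨slope f x ((x+1)/2), ?_⟩
  rintro _ ⟨t, ht, rfl⟩
  exact slope_le_slope_right hf hx ht ⟨by linarith [hx.2], by linarith [hx.2]⟩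

lemma hasDerivWithinAt_left (hf : ConvexOn ℝ (Icc (0:ℝ) 1) f) {x : ℝ} (hx : x ∈ Ioo (0:ℝ) 1) :
    HasDerivWithinAt f (sSup (slope f x '' Ioo 0 x)) (Iio x) x := by
  rw [hasDerivWithinAt_iff_tendsto_slope' (s := Iio x) (by simp : x ∉ Iio x)]
  exact MonotoneOn.tendsto_nhdsWithin_Ioo_left ⟨x/2, by constructor <;> linarith [hx.1]⟩
    (slope_monoOn hf hx) (slope_bddAbove hf hx)

lemma leftDeriv_eq_sSup (hf : ConvexOn ℝ (Icc (0:ℝ) 1) f) {x : ℝ} (hx : x ∈ Ioo (0:ℝ) 1) :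
    leftDeriv f x = sSup (slope f x '' Ioo 0 x) :=
  (hasDerivWithinAt_left hf hx).derivWithin (uniqueDiffWithinAt_Iio x)

lemma slope_le_leftDeriv (hf : ConvexOn ℝ (Icc (0:ℝ) 1) f) {x : ℝ} (hx : x ∈ Ioo (0:ℝ) 1)
    {t : ℝ} (ht : t ∈ Ioo (0:ℝ) x) : slope f x t ≤ leftDeriv f x := by
  rw [leftDeriv_eq_sSup hf hx]
  exact le_csSup (slope_bddAbove hf hx) (mem_image_of_mem _ ht)

lemma leftDeriv_le_slope (hf : ConvexOn ℝ (Icc (0:ℝ) 1) f) {x : ℝ} (hx : x ∈ Ioo (0:ℝ) 1)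
    {v : ℝ} (hv : v ∈ Ioc x 1) : leftDeriv f x ≤ slope f x v := by
  rw [leftDeriv_eq_sSup hf hx]
  refine csSup_le (Nonempty.image _ ⟨x/2, by constructor <;> linarith [hx.1]⟩) ?_
  rintro _ ⟨t, ht, rfl⟩
  exact slope_le_slope_right hf hx ht hv

lemma leftDeriv_monoOn (hf : ConvexOn ℝ (Icc (0:ℝ) 1) f) :
    MonotoneOn (leftDeriv f) (Ioo 0 1) := by
  intro x hx y hy hxy
  rcases eq_or_lt_of_le hxy with rfl | h
  · exact le_refl _
  calc leftDeriv f x ≤ slope f x y := leftDeriv_le_slope hf hx ⟨h, hy.2.le⟩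
    _ = slope f y x := slope_comm f x y
    _ ≤ leftDeriv f y := slope_le_leftDeriv hf hy ⟨hx.1, h⟩

lemma leftDeriv_eq_of_affine (hf : ConvexOn ℝ (Icc (0:ℝ) 1) f) {x c b m k : ℝ}
    (hx : x ∈ Ioo (0:ℝ) 1) (hc : 0 ≤ c) (hxcb : x ∈ Ioc c b)
    (haff : ∀ t ∈ Ioc c b, f t = m * t + k) : leftDeriv f x = m := by
  have hcx : c < x := hxcb.1
  have slope_eq : ∀ t ∈ Ioc c b, t ≠ x → slope f x t = m := by
    intro t ht htx
    rw [slope_real, haff t ht, haff x hxcb]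
    have : t - x ≠ 0 := sub_ne_zero.2 htx
    field_simp
    ring
  rw [leftDeriv_eq_sSup hf hx]
  have hne : (Ioo (0:ℝ) x).Nonempty := ⟨x/2, by constructor <;> linarith [hx.1]⟩
  apply le_antisymm
  · refine csSup_le (hne.image _) ?_
    rintro _ ⟨t, ht, rfl⟩
    set t' := (max c t + x)/2 with ht'def
    have hmax : max c t < x := max_lt hcx ht.2
    have hmax0 : 0 ≤ max c t := le_trans hc (le_max_left _ _)
    have ht'x : t' < x := by rw [ht'def]; linarith
    have ht'0 : 0 < t' := by rw [ht'def]; linarith [hx.1]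
    have ht'c : c < t' := by
      have : c ≤ max c t := le_max_left _ _
      rw [ht'def]; linarith
    have ht'b : t' ≤ b := le_trans ht'x.le hxcb.2
    have htt' : t ≤ t' := by
      have : t ≤ max c t := le_max_right _ _
      rw [ht'def]; linarith
    calc slope f x t ≤ slope f x t' := slope_monoOn hf hx ht ⟨ht'0, ht'x⟩ htt'
      _ = m := slope_eq t' ⟨ht'c, ht'b⟩ (ne_of_lt ht'x)
  · refine le_csSup (slope_bddAbove hf hx) ?_
    refine ⟨(c + x)/2, ⟨by linarith [hx.1], by linarith⟩, ?_⟩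
    exact slope_eq _ ⟨by linarith, by linarith [hxcb.2]⟩ (by intro h; rw [← h] at hcx; linarith [hcx])

end LeftDeriv


section Chord

variable {f F : ℝ → ℝ}

lemma chord_eq (hfconv : ConvexOn ℝ (Icc (0:ℝ) 1) f)
    (hFle : ∀ z ∈ Icc (0:ℝ) 1, f z ≤ F z)
    (hfmax : ∀ g : ℝ → ℝ, ConvexOn ℝ (Icc (0:ℝ) 1) g → (∀ z ∈ Icc (0:ℝ) 1, g z ≤ F z) →
      ∀ x ∈ Icc (0:ℝ) 1, g x ≤ f x)
    (hFcont : ContinuousOn F (Icc (0:ℝ) 1))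
    {c d : ℝ} (hcd : c < d) (hsub : Icc c d ⊆ Icc (0:ℝ) 1)
    (hlt : ∀ t ∈ Icc c d, f t < F t) :
    ∀ t ∈ Icc c d, f t = f c + slope f c d * (t - c) := by
  set m := slope f c d with hm
  set L : ℝ → ℝ := fun t => f c + m * (t - c) with hLdef
  have hdc : (0:ℝ) < d - c := by linarith
  have hdc' : d - c ≠ 0 := ne_of_gt hdc
  have hLc : L c = f c := by simp [hLdef]
  have hmval : m = (f d - f c) / (d - c) := by rw [hm, slope_real]
  have hLd : L d = f d := by
    rw [hLdef]
    simp only []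
    rw [hmval]
    field_simp
    ring
  have hcS : c ∈ Icc (0:ℝ) 1 := hsub ⟨le_rfl, hcd.le⟩
  have hdS : d ∈ Icc (0:ℝ) 1 := hsub ⟨hcd.le, le_rfl⟩
  have step1 : ∀ t ∈ Icc c d, f t ≤ L t := by
    intro t ht
    set a := (d - t)/(d - c) with hadef
    set b := (t - c)/(d - c) with hbdef
    have ha : 0 ≤ a := div_nonneg (by linarith [ht.2]) hdc.le
    have hb : 0 ≤ b := div_nonneg (by linarith [ht.1]) hdc.le
    have hab : a + b = 1 := by rw [hadef, hbdef]; field_simp; ring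
    have hcomb : a * c + b * d = t := by rw [hadef, hbdef]; field_simp; ring
    have hcv := hfconv.2 hcS hdS ha hb hab
    simp only [smul_eq_mul] at hcv
    rw [hcomb] at hcv
    have heq : a * f c + b * f d = L t := by
      rw [hadef, hbdef, hLdef]
      simp only []
      rw [hmval]
      field_simp
      ring
    linarith
  have hLcont : Continuous L := by
    rw [hLdef]
    exact continuous_const.add (continuous_const.mul (continuous_id.sub continuous_const))
  have hcont : ContinuousOn (fun t => L t - F t) (Icc c d) :=
    hLcont.continuousOn.sub (hFcont.mono hsub)
  obtain ⟨ts, hts, htsmax⟩ :=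
    isCompact_Icc.exists_isMaxOn ⟨c, left_mem_Icc.2 hcd.le⟩ hcont
  set e := L ts - F ts with hedef
  set e' := max e 0 with he'def
  have he'0 : 0 ≤ e' := le_max_right _ _
  have hee' : e ≤ e' := le_max_left _ _
  have hbnd : ∀ t ∈ Icc c d, L t - F t ≤ e := fun t ht => htsmax ht
  set N : ℝ → ℝ := fun x => max (f x) (L x - e') with hNdef
  have hNconv : ConvexOn ℝ (Icc (0:ℝ) 1) N := by
    refine ConvexOn.sup hfconv ?_
    refine ⟨convex_Icc 0 1, fun x hx y hy a b ha hb hab => ?_⟩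
    simp only [smul_eq_mul, hLdef]
    have hb' : b = 1 - a := by linarith
    subst hb'
    apply le_of_eq
    ring
  have hNle : ∀ z ∈ Icc (0:ℝ) 1, N z ≤ F z := by
    intro z hz
    refine max_le (hFle z hz) ?_
    by_cases hzc : z ∈ Icc c d
    · have := hbnd z hzc; linarith
    · simp only [mem_Icc, not_and_or, not_le] at hzc
      have hLz : L z ≤ f z := by
        rcases hzc with h | h
        · -- z < c
          have hs := hfconv.secant_mono hcS hz hdS (ne_of_lt h) (ne_of_gt hcd)
            ((h.trans hcd).le)
          rw [← hmval] at hs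
          have hzc0 : z - c < 0 := by linarith
          have := (div_le_iff_of_neg hzc0).1 hs
          rw [hLdef]
          simp only []
          linarith
        · -- d < z
          have hs := hfconv.secant_mono hdS hcS hz (ne_of_lt hcd) (ne_of_gt h)
            ((hcd.trans h).le)
          have hLHS : (f c - f d)/(c - d) = m := by
            rw [hmval, div_eq_div_iff (by linarith : c - d ≠ 0) hdc']
            ring
          rw [hLHS] at hs
          have hzd0 : (0:ℝ) < z - d := by linarith
          have h2 := (le_div_iff₀ hzd0).1 hs
          have hmdc : m * (d - c) = f d - f c := by
            rw [hmval]; field_simp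
          have hsplit : m * (z - c) = m * (z - d) + m * (d - c) := by ring
          rw [hLdef]
          simp only []
          linarith
      linarith [hFle z hz, he'0]
  have hNf := hfmax N hNconv hNle
  have hkey : ∀ t ∈ Icc c d, L t - e' ≤ f t := fun t ht =>
    le_trans (le_max_right _ _) (hNf t (hsub ht))
  rcases le_or_gt e 0 with he | he
  · have he'eq : e' = 0 := max_eq_right he
    intro t ht
    have h1 := hkey t ht
    rw [he'eq, sub_zero] at h1
    have h2 := step1 t ht
    have hft : f t = L t := le_antisymm h2 h1
    rw [hft, hLdef]
  · exfalso
    have he'eq : e' = e := max_eq_left he.le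
    have h1 := hkey ts hts
    rw [he'eq, hedef] at h1
    have hFf : F ts ≤ f ts := by linarith
    exact absurd hFf (not_le.2 (hlt ts hts))

end Chord


section Affine

variable {f F : ℝ → ℝ}

lemma affine_on_open (hfconv : ConvexOn ℝ (Icc (0:ℝ) 1) f)
    (hFle : ∀ z ∈ Icc (0:ℝ) 1, f z ≤ F z)
    (hfmax : ∀ g : ℝ → ℝ, ConvexOn ℝ (Icc (0:ℝ) 1) g → (∀ z ∈ Icc (0:ℝ) 1, g z ≤ F z) →
      ∀ x ∈ Icc (0:ℝ) 1, g x ≤ f x)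
    (hFcont : ContinuousOn F (Icc (0:ℝ) 1))
    {c d : ℝ} (hc : 0 ≤ c) (hd : d ≤ 1) (hcd : c < d)
    (hnc : ∀ t ∈ Ioo c d, f t < F t) :
    ∃ m k : ℝ, ∀ t ∈ Ioo c d, f t = m * t + k := by
  set r₁ := c + (d - c)/4 with hr₁def
  set r₂ := d - (d - c)/4 with hr₂def
  have hr12 : r₁ < r₂ := by rw [hr₁def, hr₂def]; linarith
  have hcr₁ : c < r₁ := by rw [hr₁def]; linarith
  have hr₂d : r₂ < d := by rw [hr₂def]; linarith
  refine ⟨slope f r₁ r₂, f r₁ - slope f r₁ r₂ * r₁, ?_⟩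
  intro t ht
  set c' := (c + min t r₁)/2 with hc'def
  set d' := (max t r₂ + d)/2 with hd'def
  have hminc : c < min t r₁ := lt_min ht.1 hcr₁
  have hmaxd : max t r₂ < d := max_lt ht.2 hr₂d
  have hcc' : c < c' := by rw [hc'def]; linarith
  have hc'min : c' < min t r₁ := by rw [hc'def]; linarith
  have hmaxd' : max t r₂ < d' := by rw [hd'def]; linarith
  have hd'd : d' < d := by rw [hd'def]; linarith
  have hc'd' : c' < d' := by
    calc c' < min t r₁ := hc'min
      _ ≤ t := min_le_left _ _
      _ ≤ max t r₂ := le_max_left _ _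
      _ < d' := hmaxd'
  have hsubIoo : Icc c' d' ⊆ Ioo c d := fun x hx =>
    ⟨lt_of_lt_of_le hcc' hx.1, lt_of_le_of_lt hx.2 hd'd⟩
  have hsub01 : Icc c' d' ⊆ Icc (0:ℝ) 1 := fun x hx =>
    ⟨le_trans hc (le_of_lt (hsubIoo hx).1), le_trans (le_of_lt (hsubIoo hx).2) hd⟩
  have key := chord_eq hfconv hFle hfmax hFcont hc'd' hsub01
    (fun s hs => hnc s (hsubIoo hs))
  have htmem : t ∈ Icc c' d' :=
    ⟨le_trans hc'min.le (min_le_left _ _), le_trans (le_max_left _ _) hmaxd'.le⟩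
  have hr₁mem : r₁ ∈ Icc c' d' :=
    ⟨le_trans hc'min.le (min_le_right _ _),
     le_trans (le_trans hr12.le (le_max_right t r₂)) hmaxd'.le⟩
  have hr₂mem : r₂ ∈ Icc c' d' :=
    ⟨le_trans hc'min.le (le_trans (min_le_right _ _) hr12.le),
     le_trans (le_max_right t r₂) hmaxd'.le⟩
  have e1 := key t htmem
  have e2 := key r₁ hr₁mem
  have e3 := key r₂ hr₂mem
  have hslope : slope f r₁ r₂ = slope f c' d' := by
    rw [slope_real, e2, e3]
    rw [div_eq_iff (by linarith : r₂ - r₁ ≠ 0)]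
    ring
  rw [e1, e2, hslope]
  ring

lemma affine_extend_right (hfconv : ConvexOn ℝ (Icc (0:ℝ) 1) f)
    {c d m k : ℝ} (hd : d ∈ Ioo (0:ℝ) 1) (hcd : c < d)
    (haff : ∀ t ∈ Ioo c d, f t = m * t + k) : f d = m * d + k := by
  have hcontOn : ContinuousOn f (Ioo (0:ℝ) 1) := by
    have := hfconv.continuousOn_interior
    rwa [interior_Icc] at this
  have hcont : ContinuousAt f d := hcontOn.continuousAt (Ioo_mem_nhds hd.1 hd.2)
  have h2 : Tendsto f (𝓝[<] d) (𝓝 (f d)) := hcont.tendsto.mono_left nhdsWithin_le_nhds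
  have h3 : Tendsto (fun t => m * t + k) (𝓝[<] d) (𝓝 (m * d + k)) :=
    ((continuous_const.mul continuous_id).add continuous_const).tendsto' d _ rfl
      |>.mono_left nhdsWithin_le_nhds
  have h4 : f =ᶠ[𝓝[<] d] fun t => m * t + k :=
    eventually_of_mem (Ioo_mem_nhdsLT hcd) haff
  exact tendsto_nhds_unique ((tendsto_congr' h4).1 h2) h3

lemma affine_extend_left (hfconv : ConvexOn ℝ (Icc (0:ℝ) 1) f)
    {c d m k : ℝ} (hc : c ∈ Ioo (0:ℝ) 1) (hcd : c < d)
    (haff : ∀ t ∈ Ioo c d, f t = m * t + k) : f c = m * c + k := by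
  have hcontOn : ContinuousOn f (Ioo (0:ℝ) 1) := by
    have := hfconv.continuousOn_interior
    rwa [interior_Icc] at this
  have hcont : ContinuousAt f c := hcontOn.continuousAt (Ioo_mem_nhds hc.1 hc.2)
  have h2 : Tendsto f (𝓝[>] c) (𝓝 (f c)) := hcont.tendsto.mono_left nhdsWithin_le_nhds
  have h3 : Tendsto (fun t => m * t + k) (𝓝[>] c) (𝓝 (m * c + k)) :=
    ((continuous_const.mul continuous_id).add continuous_const).tendsto' c _ rfl
      |>.mono_left nhdsWithin_le_nhds
  have h4 : f =ᶠ[𝓝[>] c] fun t => m * t + k :=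
    eventually_of_mem (Ioo_mem_nhdsGT hcd) haff
  exact tendsto_nhds_unique ((tendsto_congr' h4).1 h2) h3

lemma contact_csSup (hfconv : ConvexOn ℝ (Icc (0:ℝ) 1) f)
    (hFcont : ContinuousOn F (Icc (0:ℝ) 1))
    {B : Set ℝ} (hB : ∀ t ∈ B, f t = F t) (hne : B.Nonempty) (hbdd : BddAbove B)
    (hs : sSup B ∈ Ioo (0:ℝ) 1) : f (sSup B) = F (sSup B) := by
  have hcl : sSup B ∈ closure B := csSup_mem_closure hne hbdd
  obtain ⟨x, hxB, hxlim⟩ := mem_closure_iff_seq_limit.1 hcl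
  have hcontOn : ContinuousOn f (Ioo (0:ℝ) 1) := by
    have := hfconv.continuousOn_interior
    rwa [interior_Icc] at this
  have hfc : ContinuousAt f (sSup B) := hcontOn.continuousAt (Ioo_mem_nhds hs.1 hs.2)
  have hFc : ContinuousAt F (sSup B) :=
    hFcont.continuousAt (Icc_mem_nhds hs.1 hs.2)
  have h1 : Tendsto (fun n => f (x n)) atTop (𝓝 (f (sSup B))) := hfc.tendsto.comp hxlim
  have h2 : Tendsto (fun n => F (x n)) atTop (𝓝 (F (sSup B))) := hFc.tendsto.comp hxlim
  have heq : (fun n => f (x n)) = fun n => F (x n) := funext fun n => hB _ (hxB n)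
  rw [heq] at h1
  exact tendsto_nhds_unique h1 h2

lemma contact_csInf (hfconv : ConvexOn ℝ (Icc (0:ℝ) 1) f)
    (hFcont : ContinuousOn F (Icc (0:ℝ) 1))
    {B : Set ℝ} (hB : ∀ t ∈ B, f t = F t) (hne : B.Nonempty) (hbdd : BddBelow B)
    (hs : sInf B ∈ Ioo (0:ℝ) 1) : f (sInf B) = F (sInf B) := by
  have hcl : sInf B ∈ closure B := csInf_mem_closure hne hbdd
  obtain ⟨x, hxB, hxlim⟩ := mem_closure_iff_seq_limit.1 hcl
  have hcontOn : ContinuousOn f (Ioo (0:ℝ) 1) := by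
    have := hfconv.continuousOn_interior
    rwa [interior_Icc] at this
  have hfc : ContinuousAt f (sInf B) := hcontOn.continuousAt (Ioo_mem_nhds hs.1 hs.2)
  have hFc : ContinuousAt F (sInf B) :=
    hFcont.continuousAt (Icc_mem_nhds hs.1 hs.2)
  have h1 : Tendsto (fun n => f (x n)) atTop (𝓝 (f (sInf B))) := hfc.tendsto.comp hxlim
  have h2 : Tendsto (fun n => F (x n)) atTop (𝓝 (F (sInf B))) := hFc.tendsto.comp hxlim
  have heq : (fun n => f (x n)) = fun n => F (x n) := funext fun n => hB _ (hxB n)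
  rw [heq] at h1
  exact tendsto_nhds_unique h1 h2

end Affine


lemma key_mono {p : ℝ} (hp : 1 ≤ p) (μ ν : Measure ℝ) (hμ : MemPp p μ) (hν : MemPp p ν) :
    MonotoneOn (fun u => quantile μ u - leftDeriv (convexHullFn (Icc 0 1) (Gfun μ ν)) u)
      (Ioo 0 1) := by
  haveI := hμ.1
  haveI := hν.1
  have hg : IntegrableOn (fun u => quantile μ u - quantile ν u) (Ioo 0 1) :=
    (integrableOn_quantile hp μ hμ.2).sub (integrableOn_quantile hp ν hν.2)
  set F := Gfun μ ν with hFdef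
  have hFcont : ContinuousOn F (Icc 0 1) := G_continuousOn hg
  obtain ⟨z₀, hz₀S, hz₀min⟩ :=
    isCompact_Icc.exists_isMinOn ⟨0, left_mem_Icc.2 zero_le_one⟩ hFcont
  have hm₀ : ∀ z ∈ Icc (0:ℝ) 1, F z₀ ≤ F z := fun z hz => hz₀min hz
  set f := convexHullFn (Icc 0 1) F with hfdef
  have hfconv : ConvexOn ℝ (Icc (0:ℝ) 1) f := hull_convexOn _ hm₀
  have hFle : ∀ z ∈ Icc (0:ℝ) 1, f z ≤ F z := fun z hz => hull_le _ hm₀ hz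
  have hfmax : ∀ g : ℝ → ℝ, ConvexOn ℝ (Icc (0:ℝ) 1) g →
      (∀ z ∈ Icc (0:ℝ) 1, g z ≤ F z) → ∀ x ∈ Icc (0:ℝ) 1, g x ≤ f x :=
    fun g hg1 hg2 x hx => le_hull hg1 hg2 hx
  have hq1 := quantile_monotoneOn μ
  have hq2 := quantile_monotoneOn ν
  set A := {t : ℝ | t ∈ Icc (0:ℝ) 1 ∧ f t = F t} with hAdef
  have h0A : (0:ℝ) ∈ A := ⟨left_mem_Icc.2 zero_le_one, hull_endpoint_zero _ hm₀⟩
  have h1A : (1:ℝ) ∈ A := ⟨right_mem_Icc.2 zero_le_one, hull_endpoint_one _ hm₀⟩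
  have hAc : ∀ t ∈ A, f t = F t := fun t ht => ht.2
  have contact_lower : ∀ w ∈ Ioo (0:ℝ) 1, f w = F w →
      ∀ t ∈ Ioo (0:ℝ) w, quantile μ t - quantile ν w ≤ leftDeriv f w := by
    intro w hw hcw t ht
    have htm : t ∈ Ioo (0:ℝ) 1 := ⟨ht.1, ht.2.trans hw.2⟩
    refine le_trans ?_ (slope_le_leftDeriv hfconv hw ht)
    rw [slope_real]
    have h1 : (quantile μ t - quantile ν w) * (w - t) ≤ F w - F t :=
      G_slope_lower hg htm hw ht.2
    have h2 : f t ≤ F t := hFle t ⟨htm.1.le, htm.2.le⟩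
    have hwt : (0:ℝ) < w - t := by linarith [ht.2]
    have h3 : (f t - f w)/(t - w) = (f w - f t)/(w - t) := by
      rw [div_eq_div_iff (sub_ne_zero.2 (ne_of_lt ht.2)) (ne_of_gt hwt)]
      ring
    rw [h3, hcw, le_div_iff₀ hwt]
    linarith
  intro u hu v hv huv
  rcases eq_or_lt_of_le huv with rfl | huv
  · exact le_refl _
  show quantile μ u - leftDeriv f u ≤ quantile μ v - leftDeriv f v
  by_cases hA' : (A ∩ Icc u v).Nonempty
  · -- there is a contact point in [u, v]
    set a := sInf (A ∩ Icc u v) with hadef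
    set b := sSup (A ∩ Icc u v) with hbdef
    have habdd : BddAbove (A ∩ Icc u v) := ⟨v, fun x hx => hx.2.2⟩
    have habddB : BddBelow (A ∩ Icc u v) := ⟨u, fun x hx => hx.2.1⟩
    have hau : u ≤ a := le_csInf hA' (fun x hx => hx.2.1)
    have hav : a ≤ v := by
      obtain ⟨w, hw⟩ := hA'
      exact le_trans (csInf_le habddB hw) hw.2.2
    have hbu : u ≤ b := by
      obtain ⟨w, hw⟩ := hA'
      exact le_trans hw.2.1 (le_csSup habdd hw)
    have hbv : b ≤ v := csSup_le hA' (fun x hx => hx.2.2)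
    have hab : a ≤ b := by
      obtain ⟨w, hw⟩ := hA'
      exact le_trans (csInf_le habddB hw) (le_csSup habdd hw)
    have haI : a ∈ Ioo (0:ℝ) 1 := ⟨lt_of_lt_of_le hu.1 hau, lt_of_le_of_lt hav hv.2⟩
    have hbI : b ∈ Ioo (0:ℝ) 1 := ⟨lt_of_lt_of_le hu.1 hbu, lt_of_le_of_lt hbv hv.2⟩
    have haA : f a = F a := contact_csInf hfconv hFcont (fun t ht => ht.1.2) hA' habddB haI
    have hbA : f b = F b := contact_csSup hfconv hFcont (fun t ht => ht.1.2) hA' habdd hbI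
    -- LOWER BOUND
    have hlow : quantile μ u - quantile ν a ≤ leftDeriv f u := by
      rcases eq_or_lt_of_le hau with heq | hua
      · -- a = u : u is a contact point
        have hcu : f u = F u := by rw [heq]; exact haA
        have hq2eq : quantile ν a = quantile ν u := by rw [← heq]
        by_contra hcon
        push_neg at hcon
        have hεpos : 0 < quantile μ u - quantile ν a - leftDeriv f u := by linarith
        obtain ⟨t, ht, hqt⟩ := quantile_no_gap μ hu.1 hu.2 hεpos
        have hcl := contact_lower u hu hcu t ht
        rw [hq2eq] at hcon
        linarith
      · -- u < a
        set c₁ := sSup (A ∩ Icc 0 u) with hc₁def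
        have hc₁ne : (A ∩ Icc 0 u).Nonempty := ⟨0, h0A, le_rfl, hu.1.le⟩
        have hc₁bdd : BddAbove (A ∩ Icc 0 u) := ⟨u, fun x hx => hx.2.2⟩
        have hc₁0 : 0 ≤ c₁ := le_csSup hc₁bdd ⟨h0A, le_rfl, hu.1.le⟩
        have hc₁u : c₁ ≤ u := csSup_le hc₁ne (fun x hx => hx.2.2)
        have hunA : u ∉ A := fun h =>
          absurd (csInf_le habddB ⟨h, le_rfl, huv.le⟩) (not_le.2 hua)
        have hc₁lt : c₁ < u := by
          rcases eq_or_lt_of_le hc₁u with heq | h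
          · exfalso
            have hcc : f c₁ = F c₁ :=
              contact_csSup hfconv hFcont (fun t ht => ht.1.2) hc₁ne hc₁bdd (by show c₁ ∈ Ioo (0:ℝ) 1; rw [heq]; exact hu)
            apply hunA
            rw [← heq]
            exact ⟨⟨hc₁0, le_trans hc₁u hu.2.le⟩, hcc⟩
          · exact h
        have hnc : ∀ t ∈ Ioo c₁ a, f t < F t := by
          intro t htc
          have htS : t ∈ Icc (0:ℝ) 1 := ⟨le_trans hc₁0 htc.1.le, le_trans htc.2.le haI.2.le⟩
          have htA : t ∉ A := by
            intro hturn
            rcases le_or_gt t u with h | h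
            · exact absurd (le_csSup hc₁bdd ⟨hturn, htS.1, h⟩) (not_le.2 htc.1)
            · exact absurd (csInf_le habddB ⟨hturn, h.le, le_trans htc.2.le hav⟩)
                (not_le.2 htc.2)
          exact lt_of_le_of_ne (hFle t htS) (fun heq2 => htA ⟨htS, heq2⟩)
        obtain ⟨m, k, haff⟩ :=
          affine_on_open hfconv hFle hfmax hFcont hc₁0 haI.2.le (lt_trans hc₁lt hua) hnc
        have hfa : f a = m * a + k :=
          affine_extend_right hfconv haI (lt_trans hc₁lt hua) haff
        have haffIoc : ∀ t ∈ Ioc c₁ a, f t = m * t + k := by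
          intro t ht
          rcases eq_or_lt_of_le ht.2 with rfl | h
          · exact hfa
          · exact haff t ⟨ht.1, h⟩
        have hDu : leftDeriv f u = m :=
          leftDeriv_eq_of_affine hfconv hu hc₁0 ⟨hc₁lt, hua.le⟩ haffIoc
        have hfu : f u = m * u + k := haff u ⟨hc₁lt, hua⟩
        have h1 : (quantile μ u - quantile ν a) * (a - u) ≤ F a - F u :=
          G_slope_lower hg hu haI hua
        have h2 : f u ≤ F u := hFle u ⟨hu.1.le, hu.2.le⟩
        have h3 : m * (a - u) = f a - f u := by rw [hfa, hfu]; ring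
        have hau0 : (0:ℝ) < a - u := by linarith
        rw [hDu]
        have h4 : (quantile μ u - quantile ν a) * (a - u) ≤ m * (a - u) := by
          rw [h3]
          linarith [haA]
        exact le_of_mul_le_mul_right h4 hau0
    -- UPPER BOUND
    have hup : leftDeriv f v ≤ quantile μ v - quantile ν a ∨
        leftDeriv f v = leftDeriv f u := by
      rcases eq_or_lt_of_le hbv with heqbv | hbv' 
      · -- b = v : v is a contact point
        have hcv : f v = F v := by rw [← heqbv]; exact hbA
        by_cases hacc : ∀ s ∈ Ioo (0:ℝ) v, (A ∩ Ico s v).Nonempty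
        · left
          have hbound : ∀ t ∈ Ioo (0:ℝ) v, leftDeriv f v ≤ quantile μ v - quantile ν t := by
            intro t ht
            rw [leftDeriv_eq_sSup hfconv hv]
            refine csSup_le (Nonempty.image _ ⟨v/2, by constructor <;> linarith [hv.1]⟩) ?_
            rintro _ ⟨t', ht', rfl⟩
            have hsv : max t t' ∈ Ioo (0:ℝ) v :=
              ⟨lt_of_lt_of_le ht.1 (le_max_left _ _), max_lt ht.2 ht'.2⟩
            obtain ⟨w, hwA, hws⟩ := hacc (max t t') hsv
            have hwI : w ∈ Ioo (0:ℝ) 1 := ⟨lt_of_lt_of_le hsv.1 hws.1, lt_trans hws.2 hv.2⟩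
            have hs1 : slope f v t' ≤ slope f v w :=
              slope_monoOn hfconv hv ht' ⟨hwI.1, hws.2⟩
                (le_trans (le_max_right t t') hws.1)
            have hvw0 : (0:ℝ) < v - w := by linarith [hws.2]
            have hs2 : slope f v w = (F v - F w)/(v - w) := by
              rw [slope_real, hcv, hwA.2,
                div_eq_div_iff (sub_ne_zero.2 (ne_of_lt hws.2)) (ne_of_gt hvw0)]
              ring
            have h1 : F v - F w ≤ (quantile μ v - quantile ν w) * (v - w) :=
              G_slope_upper hg hwI hv hws.2
            have hq2w : quantile ν t ≤ quantile ν w :=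
              hq2 ⟨ht.1, lt_trans ht.2 hv.2⟩ hwI (le_trans (le_max_left _ _) hws.1)
            calc slope f v t' ≤ (F v - F w)/(v - w) := hs1.trans_eq hs2
              _ ≤ quantile μ v - quantile ν w := (div_le_iff₀ hvw0).2 h1
              _ ≤ quantile μ v - quantile ν t := by linarith
          by_contra hcon
          push_neg at hcon
          have hq2av : quantile ν a ≤ quantile ν v := hq2 haI hv hav
          have hεpos : 0 < leftDeriv f v - (quantile μ v - quantile ν a) := by linarith
          obtain ⟨t, ht, hqt⟩ := quantile_no_gap ν hv.1 hv.2 hεpos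
          have := hbound t ht
          linarith
        · push_neg at hacc
          obtain ⟨t₀, ht₀, ht₀E⟩ := hacc
          set c₂ := sSup (A ∩ Icc 0 t₀) with hc₂def
          have hc₂ne : (A ∩ Icc 0 t₀).Nonempty := ⟨0, h0A, le_rfl, ht₀.1.le⟩
          have hc₂bdd : BddAbove (A ∩ Icc 0 t₀) := ⟨t₀, fun x hx => hx.2.2⟩
          have hc₂0 : 0 ≤ c₂ := le_csSup hc₂bdd ⟨h0A, le_rfl, ht₀.1.le⟩
          have hc₂t₀ : c₂ ≤ t₀ := csSup_le hc₂ne (fun x hx => hx.2.2)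
          have hc₂v : c₂ < v := lt_of_le_of_lt hc₂t₀ ht₀.2
          have hnc : ∀ t ∈ Ioo c₂ v, f t < F t := by
            intro t htc
            have htS : t ∈ Icc (0:ℝ) 1 := ⟨le_trans hc₂0 htc.1.le, (lt_trans htc.2 hv.2).le⟩
            have htA : t ∉ A := by
              intro hturn
              rcases le_or_gt t t₀ with h | h
              · exact absurd (le_csSup hc₂bdd ⟨hturn, htS.1, h⟩) (not_le.2 htc.1)
              · have hmem : t ∈ A ∩ Ico t₀ v := ⟨hturn, h.le, htc.2⟩
                rw [ht₀E] at hmem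
                exact hmem
            exact lt_of_le_of_ne (hFle t htS) (fun heq2 => htA ⟨htS, heq2⟩)
          obtain ⟨m, k, haff⟩ :=
            affine_on_open hfconv hFle hfmax hFcont hc₂0 hv.2.le hc₂v hnc
          have hfv : f v = m * v + k := affine_extend_right hfconv hv hc₂v haff
          have haffIoc : ∀ t ∈ Ioc c₂ v, f t = m * t + k := by
            intro t ht
            rcases eq_or_lt_of_le ht.2 with rfl | h
            · exact hfv
            · exact haff t ⟨ht.1, h⟩
          have hDv : leftDeriv f v = m :=
            leftDeriv_eq_of_affine hfconv hv hc₂0 ⟨hc₂v, le_rfl⟩ haffIoc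
          rcases lt_or_ge c₂ u with hc₂u | huc₂
          · right
            have hDu : leftDeriv f u = m :=
              leftDeriv_eq_of_affine hfconv hu hc₂0 ⟨hc₂u, huv.le⟩ haffIoc
            rw [hDv, hDu]
          · left
            have hc₂I : c₂ ∈ Ioo (0:ℝ) 1 :=
              ⟨lt_of_lt_of_le hu.1 huc₂, lt_trans hc₂v hv.2⟩
            have hcc₂ : f c₂ = F c₂ :=
              contact_csSup hfconv hFcont (fun t ht => ht.1.2) hc₂ne hc₂bdd hc₂I
            have hac₂ : a ≤ c₂ :=
              csInf_le habddB ⟨⟨⟨hc₂I.1.le, hc₂I.2.le⟩, hcc₂⟩, huc₂, hc₂v.le⟩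
            have hfc₂ : f c₂ = m * c₂ + k := affine_extend_left hfconv hc₂I hc₂v haff
            have h1 : F v - F c₂ ≤ (quantile μ v - quantile ν c₂) * (v - c₂) :=
              G_slope_upper hg hc₂I hv hc₂v
            have h3 : m * (v - c₂) = f v - f c₂ := by rw [hfv, hfc₂]; ring
            have hvc0 : (0:ℝ) < v - c₂ := by linarith
            have hq2ac : quantile ν a ≤ quantile ν c₂ := hq2 haI hc₂I hac₂
            rw [hDv]
            have h4 : m * (v - c₂) ≤ (quantile μ v - quantile ν c₂) * (v - c₂) := by
              rw [h3, hcv, hcc₂]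
              exact h1
            have h5 : m ≤ quantile μ v - quantile ν c₂ :=
              le_of_mul_le_mul_right h4 hvc0
            linarith
      · -- b < v
        left
        set d₂ := sInf (A ∩ Icc v 1) with hd₂def
        have hd₂ne : (A ∩ Icc v 1).Nonempty := ⟨1, h1A, hv.2.le, le_rfl⟩
        have hd₂bdd : BddBelow (A ∩ Icc v 1) := ⟨v, fun x hx => hx.2.1⟩
        have hd₂v : v ≤ d₂ := le_csInf hd₂ne (fun x hx => hx.2.1)
        have hd₂1 : d₂ ≤ 1 := csInf_le hd₂bdd ⟨h1A, hv.2.le, le_rfl⟩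
        have hvnA : v ∉ A := fun h =>
          absurd (le_csSup habdd ⟨h, huv.le, le_rfl⟩) (not_le.2 hbv')
        have hd₂v' : v < d₂ := by
          rcases eq_or_lt_of_le hd₂v with heq | h
          · exfalso
            have hcd₂ : f d₂ = F d₂ :=
              contact_csInf hfconv hFcont (fun t ht => ht.1.2) hd₂ne hd₂bdd (by show d₂ ∈ Ioo (0:ℝ) 1; rw [← heq]; exact hv)
            apply hvnA
            rw [heq]
            exact ⟨⟨le_trans hv.1.le hd₂v, hd₂1⟩, hcd₂⟩
          · exact h
        have hb0 : (0:ℝ) ≤ b := le_trans hu.1.le hbu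
        have hbd₂ : b < d₂ := lt_trans hbv' hd₂v'
        have hnc : ∀ t ∈ Ioo b d₂, f t < F t := by
          intro t htc
          have htS : t ∈ Icc (0:ℝ) 1 := ⟨le_trans hb0 htc.1.le, le_trans htc.2.le hd₂1⟩
          have htA : t ∉ A := by
            intro hturn
            rcases le_or_gt t v with h | h
            · exact absurd (le_csSup habdd ⟨hturn, le_trans hbu htc.1.le, h⟩)
                (not_le.2 htc.1)
            · exact absurd (csInf_le hd₂bdd ⟨hturn, h.le, htS.2⟩) (not_le.2 htc.2)
          exact lt_of_le_of_ne (hFle t htS) (fun heq2 => htA ⟨htS, heq2⟩)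
        obtain ⟨m, k, haff⟩ :=
          affine_on_open hfconv hFle hfmax hFcont hb0 hd₂1 hbd₂ hnc
        have haffIoc : ∀ t ∈ Ioc b v, f t = m * t + k := fun t ht =>
          haff t ⟨ht.1, lt_of_le_of_lt ht.2 hd₂v'⟩
        have hDv : leftDeriv f v = m :=
          leftDeriv_eq_of_affine hfconv hv hb0 ⟨hbv', le_rfl⟩ haffIoc
        have hfb : f b = m * b + k := affine_extend_left hfconv hbI hbd₂ haff
        have hfv : f v = m * v + k := haff v ⟨hbv', hd₂v'⟩
        have h1 : F v - F b ≤ (quantile μ v - quantile ν b) * (v - b) :=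
          G_slope_upper hg hbI hv hbv'
        have h2 : f v ≤ F v := hFle v ⟨hv.1.le, hv.2.le⟩
        have h3 : m * (v - b) = f v - f b := by rw [hfv, hfb]; ring
        have hvb0 : (0:ℝ) < v - b := by linarith
        have h4 : m * (v - b) ≤ (quantile μ v - quantile ν b) * (v - b) := by
          rw [h3]
          linarith [hbA]
        have h5 : m ≤ quantile μ v - quantile ν b := le_of_mul_le_mul_right h4 hvb0
        have hq2ab : quantile ν a ≤ quantile ν b := hq2 haI hbI hab
        rw [hDv]
        linarith
    rcases hup with h | h
    · linarith
    · rw [h]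
      linarith [hq1 hu hv huv.le]
  · -- no contact point in [u, v]
    have hunA : u ∉ A := fun h => hA' ⟨u, h, le_rfl, huv.le⟩
    have hvnA : v ∉ A := fun h => hA' ⟨v, h, huv.le, le_rfl⟩
    set c' := sSup (A ∩ Icc 0 u) with hc'def
    have hc'ne : (A ∩ Icc 0 u).Nonempty := ⟨0, h0A, le_rfl, hu.1.le⟩
    have hc'bdd : BddAbove (A ∩ Icc 0 u) := ⟨u, fun x hx => hx.2.2⟩
    have hc'0 : 0 ≤ c' := le_csSup hc'bdd ⟨h0A, le_rfl, hu.1.le⟩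
    have hc'u : c' ≤ u := csSup_le hc'ne (fun x hx => hx.2.2)
    have hc'lt : c' < u := by
      rcases eq_or_lt_of_le hc'u with heq | h
      · exfalso
        have hcc : f c' = F c' :=
          contact_csSup hfconv hFcont (fun t ht => ht.1.2) hc'ne hc'bdd (by show c' ∈ Ioo (0:ℝ) 1; rw [heq]; exact hu)
        apply hunA
        rw [← heq]
        exact ⟨⟨hc'0, le_trans hc'u hu.2.le⟩, hcc⟩
      · exact h
    set d' := sInf (A ∩ Icc v 1) with hd'def
    have hd'ne : (A ∩ Icc v 1).Nonempty := ⟨1, h1A, hv.2.le, le_rfl⟩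
    have hd'bdd : BddBelow (A ∩ Icc v 1) := ⟨v, fun x hx => hx.2.1⟩
    have hd'v : v ≤ d' := le_csInf hd'ne (fun x hx => hx.2.1)
    have hd'1 : d' ≤ 1 := csInf_le hd'bdd ⟨h1A, hv.2.le, le_rfl⟩
    have hd'lt : v < d' := by
      rcases eq_or_lt_of_le hd'v with heq | h
      · exfalso
        have hcd : f d' = F d' :=
          contact_csInf hfconv hFcont (fun t ht => ht.1.2) hd'ne hd'bdd (by show d' ∈ Ioo (0:ℝ) 1; rw [← heq]; exact hv)
        apply hvnA
        rw [heq]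
        exact ⟨⟨le_trans hv.1.le hd'v, hd'1⟩, hcd⟩
      · exact h
    have hnc : ∀ t ∈ Ioo c' d', f t < F t := by
      intro t htc
      have htS : t ∈ Icc (0:ℝ) 1 := ⟨le_trans hc'0 htc.1.le, le_trans htc.2.le hd'1⟩
      have htA : t ∉ A := by
        intro hturn
        rcases le_or_gt t u with h | h
        · exact absurd (le_csSup hc'bdd ⟨hturn, htS.1, h⟩) (not_le.2 htc.1)
        · rcases le_or_gt v t with h2 | h2
          · exact absurd (csInf_le hd'bdd ⟨hturn, h2, htS.2⟩) (not_le.2 htc.2)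
          · exact hA' ⟨t, hturn, h.le, h2.le⟩
      exact lt_of_le_of_ne (hFle t htS) (fun heq2 => htA ⟨htS, heq2⟩)
    obtain ⟨m, k, haff⟩ := affine_on_open hfconv hFle hfmax hFcont hc'0 hd'1
      (lt_trans hc'lt (lt_trans huv hd'lt)) hnc
    have haffIoc : ∀ t ∈ Ioc c' v, f t = m * t + k := fun t ht =>
      haff t ⟨ht.1, lt_of_le_of_lt ht.2 hd'lt⟩
    have hDu : leftDeriv f u = m :=
      leftDeriv_eq_of_affine hfconv hu hc'0 ⟨hc'lt, huv.le⟩ haffIoc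
    have hDv : leftDeriv f v = m :=
      leftDeriv_eq_of_affine hfconv hv hc'0 ⟨lt_trans hc'lt huv, le_rfl⟩ haffIoc
    rw [hDu, hDv]
    linarith [hq1 hu hv huv.le]


lemma key_mono_J {p : ℝ} (hp : 1 ≤ p) (μ ν : Measure ℝ) (hμ : MemPp p μ) (hν : MemPp p ν) :
    MonotoneOn (fun u => quantile ν u + leftDeriv (convexHullFn (Icc 0 1) (Gfun μ ν)) u)
      (Ioo 0 1) := by
  haveI := hμ.1
  haveI := hν.1
  have hg : IntegrableOn (fun u => quantile μ u - quantile ν u) (Ioo 0 1) :=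
    (integrableOn_quantile hp μ hμ.2).sub (integrableOn_quantile hp ν hν.2)
  have hFcont : ContinuousOn (Gfun μ ν) (Icc 0 1) := G_continuousOn hg
  obtain ⟨z₀, hz₀S, hz₀min⟩ :=
    isCompact_Icc.exists_isMinOn ⟨0, left_mem_Icc.2 zero_le_one⟩ hFcont
  have hm₀ : ∀ z ∈ Icc (0:ℝ) 1, Gfun μ ν z₀ ≤ Gfun μ ν z := fun z hz => hz₀min hz
  have hfconv : ConvexOn ℝ (Icc (0:ℝ) 1) (convexHullFn (Icc 0 1) (Gfun μ ν)) :=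
    hull_convexOn _ hm₀
  have hD := leftDeriv_monoOn hfconv
  intro x hx y hy hxy
  have h1 := quantile_monotoneOn ν hx hy hxy
  have h2 := hD hx hy hxy
  simp only []
  linarith

lemma quantile_map_eq_ae {φ : ℝ → ℝ} (hφ : MonotoneOn φ (Ioo 0 1)) :
    ∀ᵐ u ∂(volume.restrict (Ioo (0:ℝ) 1)),
      quantile (Measure.map φ (volume.restrict (Ioo (0:ℝ) 1))) u = φ u := by
  have hae : AEMeasurable φ (volume.restrict (Ioo (0:ℝ) 1)) :=
    aemeasurable_restrict_of_monotoneOn measurableSet_Ioo hφ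
  set M := Measure.map φ (volume.restrict (Ioo (0:ℝ) 1)) with hM
  have hbdd : ∀ x : ℝ, BddAbove (insert (0:ℝ) {t | t ∈ Ioo (0:ℝ) 1 ∧ φ t ≤ x}) := by
    intro x
    refine ⟨1, ?_⟩
    rintro y (rfl | hy)
    · exact zero_le_one
    · exact hy.1.2.le
  have hcdf : ∀ x : ℝ,
      M (Iic x) = ENNReal.ofReal (sSup (insert 0 {t | t ∈ Ioo (0:ℝ) 1 ∧ φ t ≤ x})) := by
    intro x
    rw [hM, Measure.map_apply_of_aemeasurable hae measurableSet_Iic,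
      Measure.restrict_apply' measurableSet_Ioo]
    set T := {t | t ∈ Ioo (0:ℝ) 1 ∧ φ t ≤ x} with hT
    have hTeq : φ ⁻¹' Iic x ∩ Ioo 0 1 = T := by
      ext t
      simp only [hT, mem_inter_iff, mem_preimage, mem_Iic, mem_setOf_eq]
      tauto
    rw [hTeq]
    set c := sSup (insert 0 T) with hc
    have hc0 : 0 ≤ c := le_csSup (hbdd x) (mem_insert 0 _)
    have hlow : Ioo 0 c ⊆ T := by
      intro s hs
      obtain ⟨y, hy, hsy⟩ := exists_lt_of_lt_csSup (insert_nonempty 0 T) hs.2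
      rcases hy with rfl | hyT
      · exact absurd hsy (not_lt.2 hs.1.le)
      · have hs1 : s ∈ Ioo (0:ℝ) 1 := ⟨hs.1, lt_trans hsy hyT.1.2⟩
        exact ⟨hs1, le_trans (hφ hs1 hyT.1 hsy.le) hyT.2⟩
    have hupp : T ⊆ Ioc 0 c := fun t ht =>
      ⟨ht.1.1, le_csSup (hbdd x) (mem_insert_of_mem _ ht)⟩
    have h1 : volume (Ioo (0:ℝ) c) ≤ volume T := measure_mono hlow
    have h2 : volume T ≤ volume (Ioc (0:ℝ) c) := measure_mono hupp
    rw [Real.volume_Ioo, sub_zero] at h1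
    rw [Real.volume_Ioc, sub_zero] at h2
    exact le_antisymm h2 h1
  set Bad := {u | u ∈ Ioo (0:ℝ) 1 ∧ ∃ ε > 0, ∀ t ∈ Ioo (0:ℝ) u, φ t ≤ φ u - ε} with hBad
  have hBadc : Bad.Countable := by
    have hch : ∀ u ∈ Bad, ∃ q : ℚ, (∀ t ∈ Ioo (0:ℝ) u, φ t < (q:ℝ)) ∧ (q:ℝ) < φ u := by
      intro u hu
      obtain ⟨ε, hε, hall⟩ := hu.2
      obtain ⟨q, hq1, hq2⟩ := exists_rat_btwn (show φ u - ε < φ u by linarith)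
      exact ⟨q, fun t ht => lt_of_le_of_lt (hall t ht) hq1, hq2⟩
    choose! Q hQ1 hQ2 using hch
    refine Set.countable_iff_exists_injOn.2 ⟨fun u => Encodable.encode (Q u), ?_⟩
    intro u₁ h₁ u₂ h₂ he
    have hQeq : Q u₁ = Q u₂ := Encodable.encode_injective he
    by_contra hne
    rcases lt_or_gt_of_ne hne with h | h
    · have l1 := hQ2 u₁ h₁
      have l2 := hQ1 u₂ h₂ u₁ ⟨h₁.1.1, h⟩
      rw [hQeq] at l1
      linarith
    · have l1 := hQ2 u₂ h₂
      have l2 := hQ1 u₁ h₁ u₂ ⟨h₂.1.1, h⟩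
      rw [hQeq] at l2
      linarith
  have hBadnull : volume Bad = 0 := hBadc.measure_zero _
  have hBadnull' : (volume.restrict (Ioo (0:ℝ) 1)) Bad = 0 :=
    le_antisymm (le_trans (Measure.restrict_le_self _) (le_of_eq hBadnull)) (zero_le (a := _))
  have h1 : ∀ᵐ u ∂(volume.restrict (Ioo (0:ℝ) 1)), u ∈ Ioo (0:ℝ) 1 :=
    ae_restrict_mem measurableSet_Ioo
  have h2 : ∀ᵐ u ∂(volume.restrict (Ioo (0:ℝ) 1)), u ∉ Bad := by
    rw [ae_iff]
    simpa using hBadnull'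
  filter_upwards [h1, h2] with u hu hnb
  have hgood : ∀ ε > 0, ∃ t ∈ Ioo (0:ℝ) u, φ u - ε < φ t := by
    intro ε hε
    by_contra hcon
    push_neg at hcon
    exact hnb ⟨hu, ε, hε, fun t ht => hcon t ht⟩
  have hFv : ∀ x : ℝ,
      (M (Iic x)).toReal = sSup (insert 0 {t | t ∈ Ioo (0:ℝ) 1 ∧ φ t ≤ x}) := by
    intro x
    rw [hcdf x, ENNReal.toReal_ofReal (le_csSup (hbdd x) (mem_insert 0 _))]
  have hmem : φ u ∈ {x | u ≤ (M (Iic x)).toReal} := by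
    rw [mem_setOf_eq, hFv]
    have hsub : Ioo (0:ℝ) u ⊆ insert 0 {t | t ∈ Ioo (0:ℝ) 1 ∧ φ t ≤ φ u} := by
      intro t ht
      have htm : t ∈ Ioo (0:ℝ) 1 := ⟨ht.1, lt_trans ht.2 hu.2⟩
      exact mem_insert_of_mem _ ⟨htm, hφ htm hu ht.2.le⟩
    calc u = sSup (Ioo (0:ℝ) u) := (csSup_Ioo hu.1).symm
      _ ≤ _ := csSup_le_csSup (hbdd (φ u)) (nonempty_Ioo.2 hu.1) hsub
  have hlb : ∀ ε > 0, ∀ x ∈ {x | u ≤ (M (Iic x)).toReal}, φ u - ε ≤ x := by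
    intro ε hε x hx
    by_contra hcon
    push_neg at hcon
    obtain ⟨t₀, ht₀, hqt₀⟩ := hgood ε hε
    rw [mem_setOf_eq, hFv] at hx
    have hcle : sSup (insert 0 {t | t ∈ Ioo (0:ℝ) 1 ∧ φ t ≤ x}) ≤ t₀ := by
      refine csSup_le (insert_nonempty _ _) ?_
      rintro y (rfl | hy)
      · exact ht₀.1.le
      · by_contra hyt
        push_neg at hyt
        have ht₀m : t₀ ∈ Ioo (0:ℝ) 1 := ⟨ht₀.1, lt_trans ht₀.2 hu.2⟩
        have : φ t₀ ≤ φ y := hφ ht₀m hy.1 hyt.le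
        linarith [hy.2]
    linarith [ht₀.2]
  have hbddb : BddBelow {x | u ≤ (M (Iic x)).toReal} :=
    ⟨φ u - 1, fun x hx => hlb 1 one_pos x hx⟩
  show sInf {x | u ≤ (M (Iic x)).toReal} = φ u
  refine le_antisymm (csInf_le hbddb hmem) ?_
  by_contra hcon
  push_neg at hcon
  set q := sInf {x | u ≤ (M (Iic x)).toReal} with hq
  have hεp : 0 < (φ u - q)/2 := by linarith
  have := le_csInf (⟨φ u, hmem⟩ : {x | u ≤ (M (Iic x)).toReal}.Nonempty)
    (fun x hx => hlb ((φ u - q)/2) hεp x hx)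
  rw [← hq] at this
  linarith

end ProjAux

/-- `W_p(I(μ,ν), μ) = W_p(J(μ,ν), ν)` and `W_p(I(μ,ν), ν) = W_p(J(μ,ν), μ)`. -/
theorem proj_equal_distances (p : ℝ) (hp : 1 ≤ p) (μ ν : Measure ℝ)
    (hμ : MemPp p μ) (hν : MemPp p ν) :
    Wp p (proj_I μ ν) μ = Wp p (proj_J μ ν) ν ∧
    Wp p (proj_I μ ν) ν = Wp p (proj_J μ ν) μ := by
  have hI : MonotoneOn
      (fun u => quantile μ u - leftDeriv (convexHullFn (Icc 0 1) (Gfun μ ν)) u) (Ioo 0 1) :=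
    ProjAux.key_mono hp μ ν hμ hν
  have hJ : MonotoneOn
      (fun u => quantile ν u + leftDeriv (convexHullFn (Icc 0 1) (Gfun μ ν)) u) (Ioo 0 1) :=
    ProjAux.key_mono_J hp μ ν hμ hν
  have hqI := ProjAux.quantile_map_eq_ae hI
  have hqJ := ProjAux.quantile_map_eq_ae hJ
  have hprojI : proj_I μ ν = Measure.map
      (fun u => quantile μ u - leftDeriv (convexHullFn (Icc 0 1) (Gfun μ ν)) u)
      (volume.restrict (Ioo (0:ℝ) 1)) := rfl
  have hprojJ : proj_J μ ν = Measure.map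
      (fun u => quantile ν u + leftDeriv (convexHullFn (Icc 0 1) (Gfun μ ν)) u)
      (volume.restrict (Ioo (0:ℝ) 1)) := rfl
  rw [← hprojI] at hqI
  rw [← hprojJ] at hqJ
  constructor
  · have e1 : (∫ u in Ioo (0:ℝ) 1, |quantile (proj_I μ ν) u - quantile μ u| ^ p)
        = ∫ u in Ioo (0:ℝ) 1, |leftDeriv (convexHullFn (Icc 0 1) (Gfun μ ν)) u| ^ p := by
      refine integral_congr_ae ?_
      filter_upwards [hqI] with u hu
      rw [hu]
      congr 1
      rw [show quantile μ u - leftDeriv (convexHullFn (Icc 0 1) (Gfun μ ν)) u - quantile μ u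
          = -(leftDeriv (convexHullFn (Icc 0 1) (Gfun μ ν)) u) from by ring, abs_neg]
    have e2 : (∫ u in Ioo (0:ℝ) 1, |quantile (proj_J μ ν) u - quantile ν u| ^ p)
        = ∫ u in Ioo (0:ℝ) 1, |leftDeriv (convexHullFn (Icc 0 1) (Gfun μ ν)) u| ^ p := by
      refine integral_congr_ae ?_
      filter_upwards [hqJ] with u hu
      rw [hu]
      congr 1
      rw [show quantile ν u + leftDeriv (convexHullFn (Icc 0 1) (Gfun μ ν)) u - quantile ν u
          = leftDeriv (convexHullFn (Icc 0 1) (Gfun μ ν)) u from by ring]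
    unfold Wp
    rw [e1, e2]
  · have e3 : (∫ u in Ioo (0:ℝ) 1, |quantile (proj_I μ ν) u - quantile ν u| ^ p)
        = ∫ u in Ioo (0:ℝ) 1,
            |quantile μ u - leftDeriv (convexHullFn (Icc 0 1) (Gfun μ ν)) u
              - quantile ν u| ^ p := by
      refine integral_congr_ae ?_
      filter_upwards [hqI] with u hu
      rw [hu]
    have e4 : (∫ u in Ioo (0:ℝ) 1, |quantile (proj_J μ ν) u - quantile μ u| ^ p)
        = ∫ u in Ioo (0:ℝ) 1,
            |quantile μ u - leftDeriv (convexHullFn (Icc 0 1) (Gfun μ ν)) u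
              - quantile ν u| ^ p := by
      refine integral_congr_ae ?_
      filter_upwards [hqJ] with u hu
      rw [hu]
      congr 1
      rw [show quantile ν u + leftDeriv (convexHullFn (Icc 0 1) (Gfun μ ν)) u - quantile μ u
          = -(quantile μ u - leftDeriv (convexHullFn (Icc 0 1) (Gfun μ ν)) u - quantile ν u)
          from by ring, abs_neg]
    unfold Wp
    rw [e3, e4]

end
end

section
/- Let μ := δ_0 and, for α ∈ (0,1), let ν^α := (1−α)·δ_{−α²} + α·δ_1. Then I(ν^α,ν^α) = ν^α, I(μ,ν^α) = δ_{α(1−α(1−α))}, W_1(I(ν^α,ν^α), I(μ,ν^α)) = 2(α + α²(α(1−α) − 1)), W_1(μ,ν^α) = α + α²(1−α), and lim_{α→0⁺} W_1(I(ν^α,ν^α), I(μ,ν^α)) / W_1(μ,ν^α) = 2. In particular, the factor 2 multiplying W_1(μ,μ') in the Lipschitz bound W_1(I(μ,ν),I(μ',ν')) ≤ 2W_1(μ,μ') + W_1(ν,ν') is optimal. -/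
open MeasureTheory Filter Set

noncomputable section

/-!
For `μ = δ_c` and a two-point measure `ν`, the function `G` is piecewise linear with slopes
`c - a ≥ c - b`, hence concave, so its convex hull on `[0,1]` is the chord from `G 0 = 0` to
`G 1`. Then `∂₋co(G)` is the constant `G 1`, and `I(δ_c, ν)` is the Dirac mass at the mean of `ν`.
For `μ = ν`, `G` vanishes and `I(ν, ν)` is the image of Lebesgue measure under `F_ν^{-1}`,
that is `ν`. Both `W_1` distances are integrals of step functions, and their ratio
`2 (1 - α + α² - α³) / (1 + α - α²)` tends to `2`.
-/

open Topology

def twoPoint (t a b : ℝ) : Measure ℝ :=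
  ENNReal.ofReal (1 - t) • Measure.dirac a + ENNReal.ofReal t • Measure.dirac b

lemma quantile_eq_of_forall_le_iff {μ : Measure ℝ} {u a : ℝ}
    (h : ∀ x, u ≤ (μ (Iic x)).toReal ↔ a ≤ x) : quantile μ u = a := by
  rw [quantile, show {x : ℝ | u ≤ (μ (Iic x)).toReal} = Ici a from Set.ext h, csInf_Ici]

lemma quantile_dirac (c : ℝ) {u : ℝ} (hu : u ∈ Ioc 0 1) : quantile (Measure.dirac c) u = c := by
  refine quantile_eq_of_forall_le_iff fun x => ?_
  by_cases hx : c ≤ x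
  · simp [Measure.dirac_apply' _ measurableSet_Iic, hx, hu.2]
  · simp [Measure.dirac_apply' _ measurableSet_Iic, hx, hu.1]

lemma twoPoint_Iic_toReal {t : ℝ} (ht : t ∈ Icc 0 1) (a b x : ℝ) :
    (twoPoint t a b (Iic x)).toReal = (if a ≤ x then 1 - t else 0) + (if b ≤ x then t else 0) := by
  have h1t : 0 ≤ 1 - t := by linarith [ht.2]
  rw [twoPoint, Measure.add_apply, Measure.smul_apply, Measure.smul_apply,
    Measure.dirac_apply' _ measurableSet_Iic, Measure.dirac_apply' _ measurableSet_Iic,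
    ENNReal.toReal_add (by simp [indicator_apply]; split_ifs <;> simp)
      (by simp [indicator_apply]; split_ifs <;> simp)]
  split_ifs <;> simp_all [ENNReal.toReal_ofReal, ht.1]

lemma quantile_twoPoint {t a b u : ℝ} (ht : t ∈ Icc 0 1) (hab : a ≤ b) (hu : u ∈ Ioc 0 1) :
    quantile (twoPoint t a b) u = if u ≤ 1 - t then a else b := by
  refine quantile_eq_of_forall_le_iff fun x => ?_
  rw [twoPoint_Iic_toReal ht]
  obtain ⟨hu0, hu1⟩ := hu
  split_ifs <;> constructor <;> intro <;> linarith

lemma setIntegral_Ioo_step {a m b : ℝ} (ham : a ≤ m) (hmb : m < b) (c d : ℝ) :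
    ∫ u in Ioo a b, (if u ≤ m then c else d) = (m - a) * c + (b - m) * d := by
  have hdisj : Disjoint (Ioc a m) (Ioo m b) :=
    Set.disjoint_left.2 fun u hu hu' => (not_le.2 hu'.1) hu.2
  rw [← Ioc_union_Ioo_eq_Ioo ham hmb,
    setIntegral_union hdisj measurableSet_Ioo
      ((integrableOn_const measure_Ioc_lt_top.ne).congr_fun
        (fun u hu => (if_pos hu.2).symm) measurableSet_Ioc)
      ((integrableOn_const measure_Ioo_lt_top.ne).congr_fun
        (fun u hu => (if_neg (not_le.2 hu.1)).symm) measurableSet_Ioo),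
    setIntegral_congr_fun measurableSet_Ioc (fun u hu => if_pos hu.2),
    setIntegral_congr_fun measurableSet_Ioo (fun u hu => if_neg (not_le.2 hu.1)),
    setIntegral_const, setIntegral_const, Real.volume_real_Ioc_of_le ham,
    Real.volume_real_Ioo_of_le hmb.le, smul_eq_mul, smul_eq_mul]

lemma map_restrict_eq_dirac {s : Set ℝ} (hs : MeasurableSet s) {f : ℝ → ℝ} {c : ℝ}
    (h : ∀ u ∈ s, f u = c) :
    Measure.map f (volume.restrict s) = volume s • Measure.dirac c := by
  rw [Measure.map_congr (g := fun _ => c) (eventuallyEq_of_mem (self_mem_ae_restrict hs) h),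
    Measure.map_const, Measure.restrict_apply_univ]

lemma map_restrict_Ioo_step {m : ℝ} (hm : m ∈ Ico 0 1) (c d : ℝ) :
    Measure.map (fun u => if u ≤ m then c else d) (volume.restrict (Ioo (0:ℝ) 1))
      = ENNReal.ofReal m • Measure.dirac c + ENNReal.ofReal (1 - m) • Measure.dirac d := by
  have hdisj : Disjoint (Ioc 0 m) (Ioo m 1) :=
    Set.disjoint_left.2 fun u hu hu' => (not_le.2 hu'.1) hu.2
  rw [← Ioc_union_Ioo_eq_Ioo hm.1 hm.2, Measure.restrict_union hdisj measurableSet_Ioo,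
    Measure.map_add _ _ (measurable_const.ite measurableSet_Iic measurable_const),
    map_restrict_eq_dirac measurableSet_Ioc (fun u hu => if_pos hu.2),
    map_restrict_eq_dirac measurableSet_Ioo (fun u hu => if_neg (not_le.2 hu.1)),
    Real.volume_Ioc, Real.volume_Ioo, sub_zero]

lemma map_quantile_twoPoint {t a b : ℝ} (ht : t ∈ Ioc 0 1) (hab : a ≤ b) :
    Measure.map (quantile (twoPoint t a b)) (volume.restrict (Ioo (0:ℝ) 1)) = twoPoint t a b := by
  have hq : quantile (twoPoint t a b) =ᵐ[volume.restrict (Ioo (0:ℝ) 1)]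
      fun u => if u ≤ 1 - t then a else b :=
    eventuallyEq_of_mem (self_mem_ae_restrict measurableSet_Ioo)
      fun u hu => quantile_twoPoint (Ioc_subset_Icc_self ht) hab (Ioo_subset_Ioc_self hu)
  rw [Measure.map_congr hq, map_restrict_Ioo_step ⟨by linarith [ht.2], by linarith [ht.1]⟩,
    sub_sub_cancel, twoPoint]

lemma convexHullFn_Icc_eq_chord {F : ℝ → ℝ}
    (h : ∀ x ∈ Icc (0:ℝ) 1, F 0 + (F 1 - F 0) * x ≤ F x) {x : ℝ} (hx : x ∈ Icc (0:ℝ) 1) :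
    convexHullFn (Icc 0 1) F x = F 0 + (F 1 - F 0) * x := by
  have h0 : (0:ℝ) ∈ Icc (0:ℝ) 1 := ⟨le_rfl, zero_le_one⟩
  have h1 : (1:ℝ) ∈ Icc (0:ℝ) 1 := ⟨zero_le_one, le_rfl⟩
  have hchord : ConvexOn ℝ (Icc 0 1) (fun y => F 0 + (F 1 - F 0) * y) :=
    ⟨convex_Icc 0 1, fun y _ z _ a b _ _ hab => le_of_eq (by
      simp only [smul_eq_mul]; linear_combination (-F 0) * hab)⟩
  -- a convex minorant `g` lies below its own chord, which lies below the chord of `F`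
  have hbound : ∀ g : ℝ → ℝ, ConvexOn ℝ (Icc 0 1) g → (∀ z ∈ Icc (0:ℝ) 1, g z ≤ F z) →
      g x ≤ F 0 + (F 1 - F 0) * x := fun g hg hgF => by
    have := hg.2 h0 h1 (sub_nonneg.2 hx.2) hx.1 (sub_add_cancel 1 x)
    simp only [smul_eq_mul, mul_zero, mul_one, zero_add] at this
    nlinarith [hgF 0 h0, hgF 1 h1, hx.1, hx.2]
  have hmem : F 0 + (F 1 - F 0) * x ∈ {y : ℝ | ∃ g : ℝ → ℝ, ConvexOn ℝ (Icc 0 1) g ∧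
      (∀ z ∈ Icc 0 1, g z ≤ F z) ∧ y = g x} := ⟨_, hchord, h, rfl⟩
  have hub : F 0 + (F 1 - F 0) * x ∈ upperBounds {y : ℝ | ∃ g : ℝ → ℝ,
      ConvexOn ℝ (Icc 0 1) g ∧ (∀ z ∈ Icc 0 1, g z ≤ F z) ∧ y = g x} := by
    rintro _ ⟨g, hg, hgF, rfl⟩
    exact hbound g hg hgF
  exact le_antisymm (csSup_le ⟨_, hmem⟩ hub) (le_csSup ⟨_, hub⟩ hmem)

lemma leftDeriv_convexHullFn_Icc_eq {F : ℝ → ℝ}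
    (h : ∀ x ∈ Icc (0:ℝ) 1, F 0 + (F 1 - F 0) * x ≤ F x) {u : ℝ} (hu : u ∈ Ioo (0:ℝ) 1) :
    leftDeriv (convexHullFn (Icc 0 1) F) u = F 1 - F 0 := by
  have hnhds : Ioo 0 u ∈ 𝓝[<] u := Ioo_mem_nhdsLT hu.1
  have heq : convexHullFn (Icc 0 1) F =ᶠ[𝓝[<] u] fun y => F 0 + (F 1 - F 0) * y :=
    eventuallyEq_of_mem hnhds fun y hy =>
      convexHullFn_Icc_eq_chord h ⟨hy.1.le, hy.2.le.trans hu.2.le⟩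
  have hderiv : HasDerivAt (fun y => F 0 + (F 1 - F 0) * y) (F 1 - F 0) u := by
    simpa using ((hasDerivAt_id u).const_mul (F 1 - F 0)).const_add (F 0)
  rw [leftDeriv, heq.derivWithin_eq (convexHullFn_Icc_eq_chord h ⟨hu.1.le, hu.2.le⟩),
    hderiv.hasDerivWithinAt.derivWithin (uniqueDiffWithinAt_Iio u)]

lemma Gfun_zero (μ ν : Measure ℝ) : Gfun μ ν 0 = 0 := by
  simp [Gfun]

lemma proj_I_eq_map_of_chord_le {μ ν : Measure ℝ}
    (h : ∀ x ∈ Icc (0:ℝ) 1, Gfun μ ν 1 * x ≤ Gfun μ ν x) :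
    proj_I μ ν = Measure.map (fun u => quantile μ u - Gfun μ ν 1) (volume.restrict (Ioo 0 1)) := by
  have hchord : ∀ x ∈ Icc (0:ℝ) 1, Gfun μ ν 0 + (Gfun μ ν 1 - Gfun μ ν 0) * x ≤ Gfun μ ν x := by
    simpa [Gfun_zero] using h
  refine Measure.map_congr (eventuallyEq_of_mem (self_mem_ae_restrict measurableSet_Ioo) ?_)
  intro u hu
  simp only [leftDeriv_convexHullFn_Icc_eq hchord hu, Gfun_zero, sub_zero]

lemma proj_I_self (μ : Measure ℝ) :
    proj_I μ μ = Measure.map (quantile μ) (volume.restrict (Ioo 0 1)) := by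
  have hG : ∀ v, Gfun μ μ v = 0 := fun v => by simp [Gfun]
  simpa [hG] using proj_I_eq_map_of_chord_le (μ := μ) (ν := μ) (by simp [hG])

section DiracTwoPoint

variable {c t a b : ℝ}

lemma Gfun_dirac_twoPoint (ht : t ∈ Icc 0 1) (hab : a ≤ b) {v : ℝ} (hv : v ∈ Icc (0:ℝ) 1) :
    Gfun (Measure.dirac c) (twoPoint t a b) v
      = if v ≤ 1 - t then v * (c - a) else (1 - t) * (c - a) + (v - (1 - t)) * (c - b) := by
  have hq : ∀ u ∈ Ioo 0 v, quantile (Measure.dirac c) u - quantile (twoPoint t a b) u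
      = if u ≤ 1 - t then c - a else c - b := fun u hu => by
    have hu' : u ∈ Ioc 0 1 := ⟨hu.1, hu.2.le.trans hv.2⟩
    rw [quantile_dirac c hu', quantile_twoPoint ht hab hu']
    split_ifs <;> rfl
  rw [Gfun, setIntegral_congr_fun measurableSet_Ioo hq]
  split_ifs with hvt
  · rw [setIntegral_congr_fun measurableSet_Ioo (fun u hu => if_pos (hu.2.le.trans hvt)),
      setIntegral_const, Real.volume_real_Ioo_of_le hv.1, smul_eq_mul, sub_zero]
  · rw [setIntegral_Ioo_step (by linarith [ht.2]) (not_le.1 hvt), sub_zero]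

lemma chord_le_Gfun_dirac_twoPoint (ht : t ∈ Ioc 0 1) (hab : a ≤ b) :
    ∀ x ∈ Icc (0:ℝ) 1, Gfun (Measure.dirac c) (twoPoint t a b) 1 * x
      ≤ Gfun (Measure.dirac c) (twoPoint t a b) x := by
  intro x hx
  rw [Gfun_dirac_twoPoint (Ioc_subset_Icc_self ht) hab hx,
    Gfun_dirac_twoPoint (Ioc_subset_Icc_self ht) hab ⟨zero_le_one, le_rfl⟩,
    if_neg (by linarith [ht.1])]
  obtain ⟨ht0, ht1⟩ := ht
  split_ifs
  · nlinarith [mul_nonneg (mul_nonneg hx.1 ht0.le) (sub_nonneg.2 hab)]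
  · -- the gap to the chord is `(b - a) (1 - x) (1 - t)`
    nlinarith [mul_nonneg (mul_nonneg (sub_nonneg.2 hx.2) (sub_nonneg.2 ht1)) (sub_nonneg.2 hab)]

lemma proj_I_dirac_twoPoint (ht : t ∈ Ioc 0 1) (hab : a ≤ b) :
    proj_I (Measure.dirac c) (twoPoint t a b) = Measure.dirac ((1 - t) * a + t * b) := by
  rw [proj_I_eq_map_of_chord_le (chord_le_Gfun_dirac_twoPoint ht hab),
    map_restrict_eq_dirac measurableSet_Ioo (c := (1 - t) * a + t * b), Real.volume_Ioo,
    sub_zero, ENNReal.ofReal_one, one_smul]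
  intro u hu
  rw [quantile_dirac c (Ioo_subset_Ioc_self hu),
    Gfun_dirac_twoPoint (Ioc_subset_Icc_self ht) hab ⟨zero_le_one, le_rfl⟩,
    if_neg (by linarith [ht.1])]
  ring

end DiracTwoPoint

lemma Wp_comm (p : ℝ) (μ ν : Measure ℝ) : Wp p μ ν = Wp p ν μ := by
  simp only [Wp, abs_sub_comm]

lemma Wp_one_twoPoint_dirac {t a b c : ℝ} (ht : t ∈ Ioc 0 1) (hac : a ≤ c) (hcb : c ≤ b) :
    Wp 1 (twoPoint t a b) (Measure.dirac c) = (1 - t) * (c - a) + t * (b - c) := by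
  have hq : ∀ u ∈ Ioo (0:ℝ) 1,
      |quantile (twoPoint t a b) u - quantile (Measure.dirac c) u| ^ (1:ℝ)
        = if u ≤ 1 - t then c - a else b - c := fun u hu => by
    rw [quantile_twoPoint (Ioc_subset_Icc_self ht) (hac.trans hcb) (Ioo_subset_Ioc_self hu),
      quantile_dirac c (Ioo_subset_Ioc_self hu), Real.rpow_one]
    split_ifs
    · rw [abs_of_nonpos (by linarith)]; ring
    · rw [abs_of_nonneg (by linarith)]
  rw [Wp, setIntegral_congr_fun measurableSet_Ioo hq,
    setIntegral_Ioo_step (by linarith [ht.2]) (by linarith [ht.1]), div_one, Real.rpow_one]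
  ring

lemma tendsto_factor_two_ratio :
    Tendsto (fun α : ℝ => 2 * (α + α ^ 2 * (α * (1 - α) - 1)) / (α + α ^ 2 * (1 - α)))
      (𝓝[>] 0) (𝓝 2) := by
  have hcont : ContinuousAt (fun α : ℝ => 2 * (1 - α + α ^ 2 - α ^ 3) / (1 + α - α ^ 2)) 0 :=
    ContinuousAt.div (by fun_prop) (by fun_prop) (by norm_num)
  have hlim := hcont.continuousWithinAt.tendsto (s := Ioi 0)
  norm_num at hlim
  refine hlim.congr' ?_
  filter_upwards [self_mem_nhdsWithin] with α (hα : 0 < α)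
  rw [← mul_div_mul_left _ _ hα.ne']
  ring_nf

/-- sharpness of the factor 2 in the Lipschitz bound for `I` when `p = 1`:
with `μ = δ_0` and `ν^α = (1-α) δ_{-α²} + α δ_1`, one has `I(ν^α,ν^α) = ν^α`,
`I(μ,ν^α) = δ_{α(1-α(1-α))}`, the stated values of the `W_1` distances, and the ratio
`W_1(I(ν^α,ν^α), I(μ,ν^α)) / W_1(μ,ν^α)` tends to `2` as `α → 0⁺`. -/
theorem factor_two_sharp (μ : Measure ℝ) (hμ : μ = Measure.dirac 0)
    (να : ℝ → Measure ℝ)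
    (hνα : ∀ α : ℝ, να α
      = ENNReal.ofReal (1 - α) • Measure.dirac (-α ^ 2)
        + ENNReal.ofReal α • Measure.dirac 1) :
    (∀ α ∈ Ioo (0:ℝ) 1,
      proj_I (να α) (να α) = να α ∧
      proj_I μ (να α) = Measure.dirac (α * (1 - α * (1 - α))) ∧
      Wp 1 (proj_I (να α) (να α)) (proj_I μ (να α))
        = 2 * (α + α ^ 2 * (α * (1 - α) - 1)) ∧
      Wp 1 μ (να α) = α + α ^ 2 * (1 - α)) ∧
    Tendsto
      (fun α => Wp 1 (proj_I (να α) (να α)) (proj_I μ (να α)) / Wp 1 μ (να α))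
      (nhdsWithin 0 (Ioi 0)) (nhds 2) := by
  have hvalues : ∀ α ∈ Ioo (0:ℝ) 1,
      proj_I (να α) (να α) = να α ∧
      proj_I μ (να α) = Measure.dirac (α * (1 - α * (1 - α))) ∧
      Wp 1 (proj_I (να α) (να α)) (proj_I μ (να α))
        = 2 * (α + α ^ 2 * (α * (1 - α) - 1)) ∧
      Wp 1 μ (να α) = α + α ^ 2 * (1 - α) := by
    intro α hα
    have hα' : α ∈ Ioc 0 1 := Ioo_subset_Ioc_self hα
    have hab : -α ^ 2 ≤ 1 := by nlinarith
    have hI : proj_I μ (να α) = Measure.dirac (α * (1 - α * (1 - α))) := by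
      rw [hμ, hνα, ← twoPoint, proj_I_dirac_twoPoint hα' hab]
      congr 1
      ring
    have hmean : α * (1 - α * (1 - α)) ∈ Icc (-α ^ 2) 1 := by
      constructor <;> nlinarith [hα.1, hα.2]
    rw [hI, proj_I_self, hνα, ← twoPoint, map_quantile_twoPoint hα' hab,
      Wp_one_twoPoint_dirac hα' hmean.1 hmean.2, hμ, Wp_comm,
      Wp_one_twoPoint_dirac hα' (by nlinarith) zero_le_one]
    exact ⟨rfl, rfl, by ring, by ring⟩
  refine ⟨hvalues, tendsto_factor_two_ratio.congr' ?_⟩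
  filter_upwards [Ioo_mem_nhdsGT zero_lt_one] with α hα
  rw [(hvalues α hα).2.2.1, (hvalues α hα).2.2.2]

end
end

section
/- Let μ, μ', ν, ν' be the probability measures on ℝ whose quantile functions are F_μ^{-1}(u) = u·1_{(0,1/2]}(u) + ((1+u)/2)·1_{(1/2,1)}(u), F_ν^{-1}(u) = u/2, F_{μ'}^{-1}(u) = u·1_{(0,1/2]}(u) + ((12+5u)/18)·1_{(1/2,1)}(u), and F_{ν'}^{-1}(u) = (u/3)·1_{(0,1/2]}(u) + (u/2)·1_{(1/2,1)}(u). Then F_{I(μ,ν)}^{-1}(u) = u/2 and F_{I(μ',ν')}^{-1}(u) = (u/3)·1_{(0,1/2]}(u) + ((3+5u)/18)·1_{(1/2,1)}(u) for u ∈ (0,1), and for every p ∈ [1,∞), W_p^p(I(μ,ν), I(μ',ν')) = W_p^p(μ,μ') + W_p^p(ν,ν'), with both summands on the right-hand side strictly positive. -/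
open MeasureTheory Filter Set
open Topology

noncomputable section

/-! ### Auxiliary lemmas -/

lemma hull_eq_on (F c : ℝ → ℝ)
    (hc : ConvexOn ℝ (Icc 0 1) c)
    (hcF : ∀ z ∈ Icc (0:ℝ) 1, c z ≤ F z)
    (hmax : ∀ g : ℝ → ℝ, ConvexOn ℝ (Icc 0 1) g → (∀ z ∈ Icc (0:ℝ) 1, g z ≤ F z) →
      ∀ x ∈ Icc (0:ℝ) 1, g x ≤ c x)
    {x : ℝ} (hx : x ∈ Icc (0:ℝ) 1) :
    convexHullFn (Icc 0 1) F x = c x := by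
  apply le_antisymm
  · refine csSup_le ⟨c x, c, hc, hcF, rfl⟩ ?_
    rintro y ⟨g, hg, hgF, rfl⟩
    exact hmax g hg hgF x hx
  · apply le_csSup
    · refine ⟨c x, ?_⟩
      rintro y ⟨g, hg, hgF, rfl⟩
      exact hmax g hg hgF x hx
    · exact ⟨c, hc, hcF, rfl⟩

lemma quantile_map_eq (S : ℝ → ℝ) (hS : Measurable S) {u t : ℝ} (hu : u ∈ Ioo (0:ℝ) 1)
    (h1 : ∀ v ∈ Ioo (0:ℝ) u, S v ≤ t)
    (h2 : ∀ x, x < t → ∃ m, m < u ∧ ∀ v, 0 < v → v < 1 → S v ≤ x → v ≤ m) :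
    quantile (Measure.map S (volume.restrict (Ioo 0 1))) u = t := by
  obtain ⟨hu0, hu1⟩ := hu
  set ρ := Measure.map S (volume.restrict (Ioo 0 1)) with hρ
  have happ : ∀ x : ℝ, ρ (Iic x) = volume (S ⁻¹' Iic x ∩ Ioo 0 1) := by
    intro x
    rw [hρ, Measure.map_apply hS measurableSet_Iic,
      Measure.restrict_apply (hS measurableSet_Iic)]
  have key : ∀ x : ℝ, u ≤ (ρ (Iic x)).toReal ↔ t ≤ x := by
    intro x
    constructor
    · intro h
      by_contra hx
      push_neg at hx
      obtain ⟨m, hm, hsub⟩ := h2 x hx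
      have hsub' : S ⁻¹' Iic x ∩ Ioo 0 1 ⊆ Ioc 0 m := by
        rintro v ⟨hv1, hv2⟩
        exact ⟨hv2.1, hsub v hv2.1 hv2.2 hv1⟩
      have hle : ρ (Iic x) ≤ ENNReal.ofReal m := by
        rw [happ x]
        calc volume (S ⁻¹' Iic x ∩ Ioo 0 1) ≤ volume (Ioc (0:ℝ) m) := measure_mono hsub'
          _ = ENNReal.ofReal (m - 0) := Real.volume_Ioc
          _ ≤ ENNReal.ofReal m := by rw [sub_zero]
      have hh : (ρ (Iic x)).toReal ≤ max m 0 := by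
        calc (ρ (Iic x)).toReal ≤ (ENNReal.ofReal m).toReal :=
              ENNReal.toReal_mono ENNReal.ofReal_ne_top hle
          _ ≤ max m 0 := by
              rcases le_or_gt 0 m with h0 | h0
              · rw [ENNReal.toReal_ofReal h0]; exact le_max_left _ _
              · rw [ENNReal.ofReal_of_nonpos h0.le]; simp
      have : u ≤ max m 0 := le_trans h hh
      rcases max_cases m 0 with ⟨he, _⟩ | ⟨he, _⟩ <;> rw [he] at this <;> linarith
    · intro hx
      have hsub : Ioo 0 u ⊆ S ⁻¹' Iic x ∩ Ioo 0 1 := by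
        intro v hv
        exact ⟨le_trans (h1 v hv) hx, hv.1, lt_trans hv.2 hu1⟩
      have hge : ENNReal.ofReal u ≤ ρ (Iic x) := by
        rw [happ x]
        calc ENNReal.ofReal u = volume (Ioo (0:ℝ) u) := by rw [Real.volume_Ioo, sub_zero]
          _ ≤ _ := measure_mono hsub
      have hfin : ρ (Iic x) ≠ ⊤ := by
        rw [happ x]
        exact ne_top_of_le_ne_top (by simp) (measure_mono inter_subset_right)
      calc u = (ENNReal.ofReal u).toReal := (ENNReal.toReal_ofReal hu0.le).symm
        _ ≤ (ρ (Iic x)).toReal := ENNReal.toReal_mono hfin hge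
  have hset : {x : ℝ | u ≤ (ρ (Iic x)).toReal} = Ici t := by
    ext x; simpa using key x
  rw [quantile, hset, csInf_Ici]

lemma Gfun_formula (μ ν : Measure ℝ) (a b : ℝ → ℝ) (ha : Continuous a) (hb : Continuous b)
    (h : ∀ u ∈ Ioo (0:ℝ) 1, quantile μ u - quantile ν u = if u ≤ 1/2 then a u else b u)
    {v : ℝ} (hv : v ∈ Icc (0:ℝ) 1) :
    Gfun μ ν v = if v ≤ 1/2 then ∫ u in (0:ℝ)..v, a u
      else (∫ u in (0:ℝ)..(1/2:ℝ), a u) + ∫ u in (1/2:ℝ)..v, b u := by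
  obtain ⟨hv0, hv1⟩ := hv
  by_cases hv2 : v ≤ 1/2
  · rw [if_pos hv2, Gfun]
    rw [intervalIntegral.integral_of_le hv0, integral_Ioc_eq_integral_Ioo]
    apply setIntegral_congr_fun measurableSet_Ioo
    intro u hu
    have hu1 : u ∈ Ioo (0:ℝ) 1 := ⟨hu.1, lt_of_lt_of_le hu.2 (le_trans hv2 (by norm_num))⟩
    exact (h u hu1).trans (if_pos (le_trans hu.2.le hv2))
  · push_neg at hv2
    rw [if_neg (not_le.mpr hv2), Gfun]
    have e1 : ∫ u in Ioo (0:ℝ) v, (quantile μ u - quantile ν u)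
        = ∫ u in Ioc (0:ℝ) v, (quantile μ u - quantile ν u) :=
      (integral_Ioc_eq_integral_Ioo).symm
    have hsplit : Ioc (0:ℝ) v = Ioc (0:ℝ) (1/2) ∪ Ioc (1/2:ℝ) v :=
      (Ioc_union_Ioc_eq_Ioc (by norm_num) hv2.le).symm
    have hIa : IntegrableOn (fun u => quantile μ u - quantile ν u) (Ioc (0:ℝ) (1/2)) volume := by
      apply (ha.integrableOn_Ioc).congr_fun _ measurableSet_Ioc
      intro u hu
      have hu1 : u ∈ Ioo (0:ℝ) 1 := ⟨hu.1, lt_of_le_of_lt hu.2 (by norm_num)⟩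
      exact ((h u hu1).trans (if_pos hu.2)).symm
    have hIbo : IntegrableOn (fun u => quantile μ u - quantile ν u) (Ioo (1/2:ℝ) v) volume := by
      apply (hb.integrableOn_Ioc.mono_set Ioo_subset_Ioc_self).congr_fun _ measurableSet_Ioo
      intro u hu
      have hu1 : u ∈ Ioo (0:ℝ) 1 := ⟨lt_trans (by norm_num) hu.1, lt_of_lt_of_le hu.2 hv1⟩
      exact ((h u hu1).trans (if_neg (not_le.mpr hu.1))).symm
    have hIb : IntegrableOn (fun u => quantile μ u - quantile ν u) (Ioc (1/2:ℝ) v) volume :=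
      hIbo.congr_set_ae Ioo_ae_eq_Ioc.symm
    rw [e1, hsplit, setIntegral_union (Ioc_disjoint_Ioc_of_le le_rfl) measurableSet_Ioc hIa hIb]
    congr 1
    · rw [intervalIntegral.integral_of_le (by norm_num)]
      apply setIntegral_congr_fun measurableSet_Ioc
      intro u hu
      have hu1 : u ∈ Ioo (0:ℝ) 1 := ⟨hu.1, lt_of_le_of_lt hu.2 (by norm_num)⟩
      exact (h u hu1).trans (if_pos hu.2)
    · rw [intervalIntegral.integral_of_le hv2.le, integral_Ioc_eq_integral_Ioo,
        integral_Ioc_eq_integral_Ioo]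
      apply setIntegral_congr_fun measurableSet_Ioo
      intro u hu
      have hu1 : u ∈ Ioo (0:ℝ) 1 := ⟨lt_trans (by norm_num) hu.1, lt_of_lt_of_le hu.2 hv1⟩
      exact (h u hu1).trans (if_neg (not_le.mpr hu.1))

lemma conv_max (k c d : ℝ) (hk : 0 ≤ k) :
    ConvexOn ℝ (Icc (0:ℝ) 1) (fun v => max (k * v^2) (c * v + d)) := by
  have h1 : ConvexOn ℝ (Icc (0:ℝ) 1) (fun v : ℝ => k * v^2) := by
    have := (Even.convexOn_pow (even_two (α := ℕ))).smul hk
    exact (this.subset (subset_univ _) (convex_Icc _ _)).congr (by intro x _; simp [smul_eq_mul])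
  have h2 : ConvexOn ℝ (Icc (0:ℝ) 1) (fun v : ℝ => c * v + d) := by
    refine ⟨convex_Icc _ _, ?_⟩
    intro x _ y _ a b _ _ hab
    simp only [smul_eq_mul]
    have : a * (c * x + d) + b * (c * y + d) = c * (a * x + b * y) + d := by
      linear_combination d * hab
    rw [this]
  exact h1.sup h2

lemma ld_quad (k u : ℝ) : derivWithin (fun v : ℝ => k * v^2) (Iio u) u = 2 * k * u := by
  have h : HasDerivAt (fun v : ℝ => k * v^2) (2 * k * u) u := by
    have := (hasDerivAt_pow 2 u).const_mul k
    simpa [mul_comm, mul_assoc, mul_left_comm] using this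
  exact h.hasDerivWithinAt.derivWithin (uniqueDiffWithinAt_Iio u)

lemma ld_lin (c d u : ℝ) : derivWithin (fun v : ℝ => c * v + d) (Iio u) u = c := by
  have h : HasDerivAt (fun v : ℝ => c * v + d) c u := by
    simpa using ((hasDerivAt_id u).const_mul c).add_const d
  exact h.hasDerivWithinAt.derivWithin (uniqueDiffWithinAt_Iio u)

lemma leftDeriv_hull (F c : ℝ → ℝ)
    (heq : ∀ x ∈ Icc (0:ℝ) 1, convexHullFn (Icc 0 1) F x = c x)
    {u : ℝ} (hu : u ∈ Ioo (0:ℝ) 1) :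
    leftDeriv (convexHullFn (Icc 0 1) F) u = leftDeriv c u := by
  apply Filter.EventuallyEq.derivWithin_eq
  · have hmem : Ioo (0:ℝ) 1 ∈ 𝓝[Iio u] u := nhdsWithin_le_nhds (isOpen_Ioo.mem_nhds hu)
    filter_upwards [hmem] with v hv
    exact heq v (Ioo_subset_Icc_self hv)
  · exact heq u (Ioo_subset_Icc_self hu)

lemma ld_max_left (k c d : ℝ) (hq : ∀ v : ℝ, v ≤ 1/2 → c * v + d ≤ k * v^2)
    {u : ℝ} (hu2 : u ≤ 1/2) :
    leftDeriv (fun v => max (k * v^2) (c * v + d)) u = 2 * k * u := by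
  rw [leftDeriv, Filter.EventuallyEq.derivWithin_eq (f := fun v : ℝ => k * v^2) ?_ ?_]
  · exact ld_quad k u
  · filter_upwards [self_mem_nhdsWithin] with v hv
    exact max_eq_left (hq v (le_trans (le_of_lt hv) hu2))
  · exact max_eq_left (hq u hu2)

lemma ld_max_right (k c d : ℝ) (hl : ∀ v : ℝ, 1/2 ≤ v → v ≤ 1 → k * v^2 ≤ c * v + d)
    {u : ℝ} (hu : 1/2 < u) (hu1 : u < 1) :
    leftDeriv (fun v => max (k * v^2) (c * v + d)) u = c := by
  rw [leftDeriv, Filter.EventuallyEq.derivWithin_eq (f := fun v : ℝ => c * v + d) ?_ ?_]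
  · exact ld_lin c d u
  · have hmem : Ioo (1/2:ℝ) 1 ∈ 𝓝[Iio u] u :=
      nhdsWithin_le_nhds (isOpen_Ioo.mem_nhds ⟨hu, hu1⟩)
    filter_upwards [hmem] with v hv
    exact max_eq_right (hl v hv.1.le hv.2.le)
  · exact max_eq_right (hl u hu.le hu1.le)

lemma case1 (μ ν : Measure ℝ)
    (hμ : ∀ u ∈ Ioo (0:ℝ) 1, quantile μ u = if u ≤ 1 / 2 then u else (1 + u) / 2)
    (hν : ∀ u ∈ Ioo (0:ℝ) 1, quantile ν u = u / 2) :
    ∀ u ∈ Ioo (0:ℝ) 1, quantile (proj_I μ ν) u = u / 2 := by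
  set c : ℝ → ℝ := fun v => max ((1/4) * v^2) ((1/2) * v + (-3/16)) with hcdef
  have hdiff : ∀ u ∈ Ioo (0:ℝ) 1, quantile μ u - quantile ν u
      = if u ≤ 1/2 then (1/2) * u else (1/2 : ℝ) := by
    intro u hu
    rw [hμ u hu, hν u hu]
    split_ifs <;> ring
  have hG : ∀ v ∈ Icc (0:ℝ) 1, Gfun μ ν v = c v := by
    intro v hv
    obtain ⟨hv0, hv1⟩ := hv
    rw [Gfun_formula μ ν _ _ (by continuity) continuous_const hdiff ⟨hv0, hv1⟩]
    have e1 : ∀ w : ℝ, (∫ u in (0:ℝ)..w, (1/2) * u) = (1/4) * w^2 := by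
      intro w
      rw [intervalIntegral.integral_const_mul, integral_id]
      ring
    have e2 : (∫ _ in (1/2:ℝ)..v, (1/2 : ℝ)) = (1/2) * (v - 1/2) := by
      rw [intervalIntegral.integral_const, smul_eq_mul]
      ring
    by_cases h : v ≤ 1/2
    · rw [if_pos h, e1]
      have hle : (1/2) * v + (-3/16 : ℝ) ≤ (1/4) * v^2 := by
        nlinarith [mul_nonneg (by linarith : (0:ℝ) ≤ 1 - 2*v) (by linarith : (0:ℝ) ≤ 3 - 2*v)]
      have hcv : c v = (1/4) * v^2 := max_eq_left hle
      rw [hcv]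
    · push_neg at h
      rw [if_neg (not_le.mpr h), e1, e2]
      have hle : (1/4) * v^2 ≤ (1/2) * v + (-3/16 : ℝ) := by
        nlinarith [mul_nonneg (by linarith : (0:ℝ) ≤ 2*v - 1) (by linarith : (0:ℝ) ≤ 3 - 2*v)]
      have hcv : c v = (1/2) * v + (-3/16 : ℝ) := max_eq_right hle
      rw [hcv]
      ring
  have hHull : ∀ x ∈ Icc (0:ℝ) 1, convexHullFn (Icc 0 1) (Gfun μ ν) x = c x := by
    intro x hx
    apply hull_eq_on _ _ (conv_max _ _ _ (by norm_num))
    · intro z hz; exact le_of_eq (hG z hz).symm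
    · intro g _ hgF x hx
      exact (hgF x hx).trans (le_of_eq (hG x hx))
    · exact hx
  have hLD : ∀ u ∈ Ioo (0:ℝ) 1,
      leftDeriv (convexHullFn (Icc 0 1) (Gfun μ ν)) u = if u ≤ 1/2 then (1/2) * u else 1/2 := by
    intro u hu
    rw [leftDeriv_hull _ _ hHull hu]
    by_cases h : u ≤ 1/2
    · rw [if_pos h, hcdef, ld_max_left _ _ _ ?_ h]
      · ring
      · intro v hv
        nlinarith [mul_nonneg (by linarith : (0:ℝ) ≤ 1 - 2*v) (by linarith : (0:ℝ) ≤ 3 - 2*v)]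
    · push_neg at h
      rw [if_neg (not_le.mpr h), hcdef, ld_max_right _ _ _ ?_ h hu.2]
      intro v hv1 hv2
      nlinarith [mul_nonneg (by linarith : (0:ℝ) ≤ 2*v - 1) (by linarith : (0:ℝ) ≤ 3 - 2*v)]
      
  have hT : ∀ u ∈ Ioo (0:ℝ) 1,
      quantile μ u - leftDeriv (convexHullFn (Icc 0 1) (Gfun μ ν)) u = u / 2 := by
    intro u hu
    rw [hμ u hu, hLD u hu]
    split_ifs <;> ring
  have hmap : proj_I μ ν = Measure.map (fun u : ℝ => u / 2) (volume.restrict (Ioo 0 1)) := by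
    rw [proj_I]
    apply Measure.map_congr
    filter_upwards [self_mem_ae_restrict measurableSet_Ioo] with u hu
    exact hT u hu
  intro u hu
  rw [hmap]
  apply quantile_map_eq _ ((continuous_id.div_const 2).measurable) hu
  · intro v hv
    show v / 2 ≤ u / 2
    linarith [hv.2]
  · intro x hx
    refine ⟨2 * x, by linarith, fun v _ _ hSv => ?_⟩
    have h' : v / 2 ≤ x := hSv
    linarith

lemma case2 (μ' ν' : Measure ℝ)
    (hμ' : ∀ u ∈ Ioo (0:ℝ) 1, quantile μ' u = if u ≤ 1 / 2 then u else (12 + 5 * u) / 18)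
    (hν' : ∀ u ∈ Ioo (0:ℝ) 1, quantile ν' u = if u ≤ 1 / 2 then u / 3 else u / 2) :
    ∀ u ∈ Ioo (0:ℝ) 1,
      quantile (proj_I μ' ν') u = if u ≤ 1 / 2 then u / 3 else (3 + 5 * u) / 18 := by
  set c : ℝ → ℝ := fun v => max ((1/3) * v^2) ((1/2) * v + (-1/6)) with hcdef
  have hdiff : ∀ u ∈ Ioo (0:ℝ) 1, quantile μ' u - quantile ν' u
      = if u ≤ 1/2 then (2/3) * u else ((-2/9) * u + 2/3) := by
    intro u hu
    rw [hμ' u hu, hν' u hu]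
    split_ifs <;> ring
  have hG : ∀ v ∈ Icc (0:ℝ) 1, Gfun μ' ν' v
      = if v ≤ 1/2 then (1/3) * v^2 else (6*v - v^2 - 2)/9 := by
    intro v hv
    obtain ⟨hv0, hv1⟩ := hv
    rw [Gfun_formula μ' ν' _ _ (by continuity) (by continuity) hdiff ⟨hv0, hv1⟩]
    have e1 : ∀ w : ℝ, (∫ u in (0:ℝ)..w, (2/3) * u) = (1/3) * w^2 := by
      intro w
      rw [intervalIntegral.integral_const_mul, integral_id]
      ring
    have e2 : (∫ u in (1/2:ℝ)..v, ((-2/9) * u + 2/3 : ℝ))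
        = (-1/9) * (v^2 - 1/4) + (2/3) * (v - 1/2) := by
      rw [intervalIntegral.integral_add ((intervalIntegral.intervalIntegrable_id).const_mul _)
        intervalIntegrable_const, intervalIntegral.integral_const_mul, integral_id,
        intervalIntegral.integral_const, smul_eq_mul]
      ring
    by_cases h : v ≤ 1/2
    · rw [if_pos h, if_pos h, e1]
    · rw [if_neg h, if_neg h, e1, e2]
      ring
  have hcF : ∀ z ∈ Icc (0:ℝ) 1, c z ≤ Gfun μ' ν' z := by
    intro z hz
    obtain ⟨hz0, hz1⟩ := hz
    rw [hG z ⟨hz0, hz1⟩]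
    by_cases h : z ≤ 1/2
    · rw [if_pos h]
      apply max_le le_rfl
      nlinarith [mul_nonneg (by linarith : (0:ℝ) ≤ 1 - 2*z) (by linarith : (0:ℝ) ≤ 1 - z)]
    · push_neg at h
      rw [if_neg (not_le.mpr h)]
      apply max_le
      · nlinarith [mul_nonneg (by linarith : (0:ℝ) ≤ 2*z - 1) (by linarith : (0:ℝ) ≤ 1 - z)]
      · nlinarith [mul_nonneg (by linarith : (0:ℝ) ≤ 2*z - 1) (by linarith : (0:ℝ) ≤ 1 - z)]
  have hmax : ∀ g : ℝ → ℝ, ConvexOn ℝ (Icc 0 1) g → (∀ z ∈ Icc (0:ℝ) 1, g z ≤ Gfun μ' ν' z) →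
      ∀ x ∈ Icc (0:ℝ) 1, g x ≤ c x := by
    intro g hg hgF x hx
    obtain ⟨hx0, hx1⟩ := hx
    by_cases hx2 : x ≤ 1/2
    · calc g x ≤ Gfun μ' ν' x := hgF x ⟨hx0, hx1⟩
        _ = (1/3) * x^2 := by rw [hG x ⟨hx0, hx1⟩, if_pos hx2]
        _ ≤ c x := le_max_left _ _
    · push_neg at hx2
      have h12 : (1/2:ℝ) ∈ Icc (0:ℝ) 1 := by norm_num
      have h1 : (1:ℝ) ∈ Icc (0:ℝ) 1 := by norm_num
      have hcomb := hg.2 h12 h1 (by linarith : (0:ℝ) ≤ 2 - 2*x)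
        (by linarith : (0:ℝ) ≤ 2*x - 1) (by ring : (2 - 2*x) + (2*x - 1) = 1)
      simp only [smul_eq_mul] at hcomb
      have hpt : (2 - 2*x) * (1/2) + (2*x - 1) * 1 = x := by ring
      rw [hpt] at hcomb
      have hG12 : Gfun μ' ν' (1/2) = 1/12 := by
        rw [hG (1/2) (by norm_num)]
        norm_num
      have hG1 : Gfun μ' ν' 1 = 1/3 := by
        rw [hG 1 (by norm_num)]
        norm_num
      have hg12 : g (1/2) ≤ 1/12 := (hgF _ h12).trans_eq hG12
      have hg1 : g 1 ≤ 1/3 := (hgF _ h1).trans_eq hG1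
      have hgx : g x ≤ (2 - 2*x) * (1/12) + (2*x - 1) * (1/3) :=
        le_trans hcomb (add_le_add (mul_le_mul_of_nonneg_left hg12 (by linarith))
          (mul_le_mul_of_nonneg_left hg1 (by linarith)))
      have hcx : c x = (1/2) * x + (-1/6) := max_eq_right (by
        nlinarith [mul_nonneg (by linarith : (0:ℝ) ≤ 2*x - 1) (by linarith : (0:ℝ) ≤ 1 - x)])
      rw [hcx]
      linarith
  have hHull : ∀ x ∈ Icc (0:ℝ) 1, convexHullFn (Icc 0 1) (Gfun μ' ν') x = c x := by
    intro x hx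
    exact hull_eq_on _ _ (conv_max _ _ _ (by norm_num)) hcF hmax hx
  have hLD : ∀ u ∈ Ioo (0:ℝ) 1,
      leftDeriv (convexHullFn (Icc 0 1) (Gfun μ' ν')) u
        = if u ≤ 1/2 then (2/3) * u else 1/2 := by
    intro u hu
    rw [leftDeriv_hull _ _ hHull hu]
    by_cases h : u ≤ 1/2
    · rw [if_pos h, hcdef, ld_max_left _ _ _ ?_ h]
      · ring
      · intro v hv
        nlinarith [mul_nonneg (by linarith : (0:ℝ) ≤ 1 - 2*v) (by linarith : (0:ℝ) ≤ 1 - v)]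
    · push_neg at h
      rw [if_neg (not_le.mpr h), hcdef, ld_max_right _ _ _ ?_ h hu.2]
      intro v hv1 hv2
      nlinarith [mul_nonneg (by linarith : (0:ℝ) ≤ 2*v - 1) (by linarith : (0:ℝ) ≤ 1 - v)]
  have hT : ∀ u ∈ Ioo (0:ℝ) 1,
      quantile μ' u - leftDeriv (convexHullFn (Icc 0 1) (Gfun μ' ν')) u
        = if u ≤ 1/2 then u / 3 else (3 + 5*u)/18 := by
    intro u hu
    rw [hμ' u hu, hLD u hu]
    split_ifs <;> ring
  set S : ℝ → ℝ := fun u => if u ≤ 1/2 then u / 3 else (3 + 5*u)/18 with hSdef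
  have hS : Measurable S := by
    apply Measurable.ite (measurableSet_le measurable_id measurable_const)
    · exact (continuous_id.div_const 3).measurable
    · exact ((continuous_const.add (continuous_const.mul continuous_id)).div_const 18).measurable
  have hmap : proj_I μ' ν' = Measure.map S (volume.restrict (Ioo 0 1)) := by
    rw [proj_I]
    apply Measure.map_congr
    filter_upwards [self_mem_ae_restrict measurableSet_Ioo] with u hu
    exact hT u hu
  intro u hu
  rw [hmap]
  by_cases hcase : u ≤ 1/2
  · rw [if_pos hcase]
    apply quantile_map_eq S hS hu
    · intro v hv
      have hv2 : v ≤ 1/2 := by linarith [hv.2]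
      show (if v ≤ 1/2 then v / 3 else (3 + 5*v)/18) ≤ u / 3
      rw [if_pos hv2]
      linarith [hv.2]
    · intro x hx
      refine ⟨3 * x, by linarith, fun v hv0 hv1 hSv => ?_⟩
      have hSv' : (if v ≤ 1/2 then v / 3 else (3 + 5*v)/18) ≤ x := hSv
      by_cases hv2 : v ≤ 1/2
      · rw [if_pos hv2] at hSv'
        linarith
      · push_neg at hv2
        rw [if_neg (not_le.mpr hv2)] at hSv'
        linarith [hu.1]
  · push_neg at hcase
    rw [if_neg (not_le.mpr hcase)]
    apply quantile_map_eq S hS hu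
    · intro v hv
      show (if v ≤ 1/2 then v / 3 else (3 + 5*v)/18) ≤ (3 + 5*u)/18
      by_cases hv2 : v ≤ 1/2
      · rw [if_pos hv2]
        linarith
      · rw [if_neg hv2]
        linarith [hv.2]
    · intro x hx
      refine ⟨max (1/2) ((18*x - 3)/5), max_lt hcase (by linarith), fun v hv0 hv1 hSv => ?_⟩
      have hSv' : (if v ≤ 1/2 then v / 3 else (3 + 5*v)/18) ≤ x := hSv
      by_cases hv2 : v ≤ 1/2
      · exact le_trans hv2 (le_max_left _ _)
      · push_neg at hv2
        rw [if_neg (not_le.mpr hv2)] at hSv'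
        exact le_trans (by linarith : v ≤ (18*x - 3)/5) (le_max_right _ _)

lemma aux_int (f : ℝ → ℝ) (hf : Measurable f) (hb : ∀ u ∈ Ioo (0:ℝ) 1, ‖f u‖ ≤ 1) :
    Integrable f (volume.restrict (Ioo (0:ℝ) 1)) := by
  refine Integrable.mono' (integrable_const 1) hf.aestronglyMeasurable ?_
  rw [ae_restrict_iff' measurableSet_Ioo]
  exact ae_of_all _ hb

lemma aux_pos (f : ℝ → ℝ) {a b ε : ℝ} (ha : 0 ≤ a) (hab : a < b) (hb1 : b ≤ 1)
    (hint : IntegrableOn f (Ioo (0:ℝ) 1) volume)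
    (hnn : ∀ u, 0 ≤ f u) (hε : 0 < ε) (hfe : ∀ u ∈ Ioo a b, ε ≤ f u) :
    0 < ∫ u in Ioo (0:ℝ) 1, f u := by
  have hsub : Ioo a b ⊆ Ioo (0:ℝ) 1 := Ioo_subset_Ioo ha hb1
  have h1 : ∫ _ in Ioo a b, ε ≤ ∫ u in Ioo a b, f u := by
    apply setIntegral_mono_on
      (integrableOn_const (by rw [Real.volume_Ioo]; exact ENNReal.ofReal_ne_top))
      (hint.mono_set hsub) measurableSet_Ioo
    exact fun x hx => hfe x hx
  have h2 : ∫ _ in Ioo a b, ε = (b - a) * ε := by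
    rw [setIntegral_const, Real.volume_real_Ioo_of_le hab.le, smul_eq_mul]
  have h3 : ∫ u in Ioo a b, f u ≤ ∫ u in Ioo (0:ℝ) 1, f u :=
    setIntegral_mono_set hint (ae_of_all _ hnn) (HasSubset.Subset.eventuallyLE hsub)
  calc (0:ℝ) < (b - a) * ε := mul_pos (by linarith) hε
    _ = ∫ _ in Ioo a b, ε := h2.symm
    _ ≤ ∫ u in Ioo a b, f u := h1
    _ ≤ _ := h3

/-- an example where the Lipschitz bound for `I` is attained with two positive
summands: `W_p^p(I(μ,ν), I(μ',ν')) = W_p^p(μ,μ') + W_p^p(ν,ν')`. -/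
theorem additive_example (μ ν μ' ν' : Measure ℝ)
    (hμP : IsProbabilityMeasure μ) (hνP : IsProbabilityMeasure ν)
    (hμ'P : IsProbabilityMeasure μ') (hν'P : IsProbabilityMeasure ν')
    (hμ : ∀ u ∈ Ioo (0:ℝ) 1, quantile μ u = if u ≤ 1 / 2 then u else (1 + u) / 2)
    (hν : ∀ u ∈ Ioo (0:ℝ) 1, quantile ν u = u / 2)
    (hμ' : ∀ u ∈ Ioo (0:ℝ) 1, quantile μ' u = if u ≤ 1 / 2 then u else (12 + 5 * u) / 18)
    (hν' : ∀ u ∈ Ioo (0:ℝ) 1, quantile ν' u = if u ≤ 1 / 2 then u / 3 else u / 2) :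
    (∀ u ∈ Ioo (0:ℝ) 1, quantile (proj_I μ ν) u = u / 2) ∧
    (∀ u ∈ Ioo (0:ℝ) 1,
      quantile (proj_I μ' ν') u = if u ≤ 1 / 2 then u / 3 else (3 + 5 * u) / 18) ∧
    ∀ p : ℝ, 1 ≤ p →
      Wp p (proj_I μ ν) (proj_I μ' ν') ^ p = Wp p μ μ' ^ p + Wp p ν ν' ^ p ∧
      0 < Wp p μ μ' ^ p ∧ 0 < Wp p ν ν' ^ p := by
  have hq1 := case1 μ ν hμ hν
  have hq2 := case2 μ' ν' hμ' hν'
  refine ⟨hq1, hq2, ?_⟩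
  intro p hp
  have hp0 : (0:ℝ) ≤ p := by linarith
  have hpne : p ≠ 0 := by positivity
  set fm : ℝ → ℝ := fun u => if u ≤ 1/2 then (0:ℝ) else |(4*u - 3)/18| ^ p with hfm
  set fn : ℝ → ℝ := fun u => if u ≤ 1/2 then |u/6| ^ p else (0:ℝ) with hfn
  have hmm : Measurable fm := by
    apply Measurable.ite (measurableSet_le measurable_id measurable_const) measurable_const
    exact (Continuous.rpow_const
      ((((continuous_const.mul continuous_id).sub continuous_const).div_const 18).abs)
      (fun x => Or.inr hp0)).measurable
  have hmn : Measurable fn := by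
    apply Measurable.ite (measurableSet_le measurable_id measurable_const) _ measurable_const
    exact (Continuous.rpow_const ((continuous_id.div_const 6).abs)
      (fun x => Or.inr hp0)).measurable
  have him : Integrable fm (volume.restrict (Ioo (0:ℝ) 1)) := by
    apply aux_int fm hmm
    intro u hu
    simp only [hfm]
    split_ifs with h
    · simp
    · rw [Real.norm_eq_abs, abs_of_nonneg (Real.rpow_nonneg (abs_nonneg _) p)]
      exact Real.rpow_le_one (abs_nonneg _)
        (abs_le.mpr ⟨by linarith [hu.1, hu.2], by linarith [hu.1, hu.2]⟩) hp0
  have hin : Integrable fn (volume.restrict (Ioo (0:ℝ) 1)) := by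
    apply aux_int fn hmn
    intro u hu
    simp only [hfn]
    split_ifs with h
    · rw [Real.norm_eq_abs, abs_of_nonneg (Real.rpow_nonneg (abs_nonneg _) p)]
      exact Real.rpow_le_one (abs_nonneg _)
        (abs_le.mpr ⟨by linarith [hu.1, hu.2], by linarith [hu.1, hu.2]⟩) hp0
    · simp
  have hcancel : ∀ X Y : Measure ℝ,
      Wp p X Y ^ p = ∫ u in Ioo (0:ℝ) 1, |quantile X u - quantile Y u| ^ p := by
    intro X Y
    have hnn : 0 ≤ ∫ u in Ioo (0:ℝ) 1, |quantile X u - quantile Y u| ^ p :=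
      integral_nonneg fun u => Real.rpow_nonneg (abs_nonneg _) p
    rw [Wp, ← Real.rpow_mul hnn, one_div, inv_mul_cancel₀ hpne, Real.rpow_one]
  have em : ∫ u in Ioo (0:ℝ) 1, |quantile μ u - quantile μ' u| ^ p
      = ∫ u in Ioo (0:ℝ) 1, fm u := by
    apply setIntegral_congr_fun measurableSet_Ioo
    intro u hu
    show |quantile μ u - quantile μ' u| ^ p = fm u
    rw [hμ u hu, hμ' u hu]
    simp only [hfm]
    by_cases h : u ≤ 1/2
    · rw [if_pos h, if_pos h, if_pos h, sub_self, abs_zero, Real.zero_rpow hpne]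
    · rw [if_neg h, if_neg h, if_neg h]
      have he : (1 + u)/2 - (12 + 5*u)/18 = (4*u - 3)/18 := by ring
      rw [he]
  have en : ∫ u in Ioo (0:ℝ) 1, |quantile ν u - quantile ν' u| ^ p
      = ∫ u in Ioo (0:ℝ) 1, fn u := by
    apply setIntegral_congr_fun measurableSet_Ioo
    intro u hu
    show |quantile ν u - quantile ν' u| ^ p = fn u
    rw [hν u hu, hν' u hu]
    simp only [hfn]
    by_cases h : u ≤ 1/2
    · rw [if_pos h, if_pos h]
      have he : u/2 - u/3 = u/6 := by ring
      rw [he]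
    · rw [if_neg h, if_neg h, sub_self, abs_zero, Real.zero_rpow hpne]
  have eI : ∫ u in Ioo (0:ℝ) 1, |quantile (proj_I μ ν) u - quantile (proj_I μ' ν') u| ^ p
      = ∫ u in Ioo (0:ℝ) 1, (fm u + fn u) := by
    apply setIntegral_congr_fun measurableSet_Ioo
    intro u hu
    show |quantile (proj_I μ ν) u - quantile (proj_I μ' ν') u| ^ p = fm u + fn u
    rw [hq1 u hu, hq2 u hu]
    simp only [hfm, hfn]
    by_cases h : u ≤ 1/2
    · rw [if_pos h, if_pos h, if_pos h]
      have he : u/2 - u/3 = u/6 := by ring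
      rw [he, zero_add]
    · rw [if_neg h, if_neg h, if_neg h]
      have he : u/2 - (3 + 5*u)/18 = (4*u - 3)/18 := by ring
      rw [he, add_zero]
  have hnnm : ∀ u, 0 ≤ fm u := by
    intro u
    simp only [hfm]
    split_ifs
    · exact le_rfl
    · exact Real.rpow_nonneg (abs_nonneg _) p
  have hnnn : ∀ u, 0 ≤ fn u := by
    intro u
    simp only [hfn]
    split_ifs
    · exact Real.rpow_nonneg (abs_nonneg _) p
    · exact le_rfl
  refine ⟨?_, ?_, ?_⟩
  · rw [hcancel, hcancel, hcancel, em, en, eI, integral_add him hin]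
  · rw [hcancel, em]
    apply aux_pos fm (a := 7/8) (b := 1) (ε := (1/36:ℝ) ^ p) (by norm_num) (by norm_num)
      le_rfl him hnnm (Real.rpow_pos_of_pos (by norm_num) p)
    intro u hu
    simp only [hfm]
    rw [if_neg (by push_neg; linarith [hu.1] : ¬ u ≤ 1/2)]
    apply Real.rpow_le_rpow (by norm_num) _ hp0
    calc (1/36:ℝ) ≤ (4*u - 3)/18 := by linarith [hu.1]
      _ ≤ |(4*u - 3)/18| := le_abs_self _
  · rw [hcancel, en]
    apply aux_pos fn (a := 1/8) (b := 1/2) (ε := (1/48:ℝ) ^ p) (by norm_num) (by norm_num)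
      (by norm_num) hin hnnn (Real.rpow_pos_of_pos (by norm_num) p)
    intro u hu
    simp only [hfn]
    rw [if_pos hu.2.le]
    apply Real.rpow_le_rpow (by norm_num) _ hp0
    calc (1/48:ℝ) ≤ u/6 := by linarith [hu.1]
      _ ≤ |u/6| := le_abs_self _

end
end

section
/- For an integer n ≥ 3, let ν := (1/(2n))δ_0 + (1/n)·Σ_{i=1}^{n−1} δ_{i/n} + (1/(2n))δ_1, μ := (1/n)·Σ_{i=1}^{n} δ_{(2i−1)/(2n)}, and η := (3/(2n))δ_{1/n} + (1/n)·Σ_{i=2}^{n−2} δ_{i/n} + (3/(2n))δ_{(n−1)/n}. Then η ≤_c μ ≤_c ν in the convex order. -/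
open MeasureTheory Filter Set

noncomputable section

/-!
Integrated against a convex `f`, `ν` is the trapezoid rule and `μ` the midpoint rule for the grid
`{i / n}` on `[0, 1]`. Each atom of `μ` is the midpoint of two neighbouring atoms of `ν`, so
`μ ≤_c ν` follows from midpoint convexity summed along the grid. Symmetrically, the inner atoms
`i / n` of `ν` are midpoints of neighbouring atoms of `μ`. This accounts for all of `η` except the
masses `1 / (2n)` left at `1 / n` and `(n - 1) / n`; that pair is majorized by the outermost atoms
`1 / (2n)` and `(2n - 1) / (2n)` of `μ`, since both pairs have mean `1 / 2`.
-/

open Finset ENNReal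

theorem Finset.sum_Icc_one_eq_sum_range {M : Type*} [AddCommMonoid M] (g : ℕ → M) (m : ℕ) :
    ∑ i ∈ Icc 1 m, g i = ∑ j ∈ range m, g (j + 1) := by
  rw [← Finset.Ico_add_one_right_eq_Icc, sum_Ico_eq_sum_range]
  simp [add_comm]

theorem Finset.sum_Icc_eq_add_sum_Icc_add {M : Type*} [AddCommMonoid M] (g : ℕ → M) {a b : ℕ}
    (hab : a < b) : ∑ i ∈ Icc a b, g i = g a + ∑ i ∈ Icc (a + 1) (b - 1), g i + g b := by
  have hsplit : Icc a b = insert a (insert b (Icc (a + 1) (b - 1))) := by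
    ext; simp only [mem_Icc, mem_insert]; omega
  rw [hsplit, sum_insert (by simp only [mem_Icc, mem_insert]; omega),
    sum_insert (by simp only [mem_Icc]; omega)]
  abel

section Midpoint

variable {E : Type*} [AddCommGroup E] [Module ℝ E] {s : Set E} {f : E → ℝ}

theorem ConvexOn.map_midpoint_le (hf : ConvexOn ℝ s f) {x y : E} (hx : x ∈ s) (hy : y ∈ s) :
    f (midpoint ℝ x y) ≤ (f x + f y) / 2 := by
  have h := hf.2 hx hy (by norm_num : (0 : ℝ) ≤ 1 / 2) (by norm_num : (0 : ℝ) ≤ 1 / 2) (by norm_num)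
  rw [midpoint_eq_smul_add, smul_add, invOf_eq_inv, ← one_div]
  simp only [smul_eq_mul] at h
  linarith

theorem ConvexOn.sum_map_midpoint_add_le (hf : ConvexOn ℝ s f) (x : ℕ → E) {m : ℕ}
    (hx : ∀ j ≤ m, x j ∈ s) :
    ∑ j ∈ range m, f (midpoint ℝ (x j) (x (j + 1))) + (f (x 0) + f (x m)) / 2 ≤
      ∑ j ∈ range (m + 1), f (x j) := by
  induction m with
  | zero => simp
  | succ m ih =>
    rw [sum_range_succ, sum_range_succ _ (m + 1)]
    linarith [ih fun j hj => hx j (by omega),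
      hf.map_midpoint_le (hx m (by omega)) (hx (m + 1) le_rfl)]

end Midpoint

theorem ConvexOn.map_add_map_le_of_add_eq {s : Set ℝ} {f : ℝ → ℝ} (hf : ConvexOn ℝ s f)
    {a b x y : ℝ} (ha : a ∈ s) (hb : b ∈ s) (hax : a ≤ x) (hxb : x ≤ b) (hxy : x + y = a + b) :
    f x + f y ≤ f a + f b := by
  obtain rfl : y = a + b - x := by linarith
  rcases hax.eq_or_lt with rfl | hax
  · simp
  rcases hxb.eq_or_lt with rfl | hxb
  · simp [add_comm]
  have hx := hf.secant_mono_aux1 ha hb hax hxb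
  have hy := hf.secant_mono_aux1 ha hb (x := a) (y := a + b - x) (by linarith) (by linarith)
  have hab : 0 < b - a := by linarith
  refine le_of_mul_le_mul_left ?_ hab
  linear_combination hx + hy

section QuadratureRules

variable {f : ℝ → ℝ}

theorem ConvexOn.midpoint_rule_le_trapezoid_rule (hf : ConvexOn ℝ (Set.Icc 0 1) f) {n : ℕ}
    (hn : n ≠ 0) :
    ∑ i ∈ Icc 1 n, f ((2 * i - 1) / (2 * n)) ≤
      f 0 / 2 + ∑ i ∈ Icc 1 (n - 1), f (i / n) + f 1 / 2 := by
  have hn' : (0 : ℝ) < n := by positivity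
  have h := hf.sum_map_midpoint_add_le (fun j : ℕ => (j : ℝ) / n) (m := n) fun j hj =>
    ⟨by positivity, div_le_one_of_le₀ (by exact_mod_cast hj) hn'.le⟩
  have hmid : ∀ j : ℕ,
      midpoint ℝ ((j : ℝ) / n) ((j + 1 : ℕ) / n) = (2 * (j + 1 : ℕ) - 1) / (2 * n) := by
    intro j
    rw [midpoint_eq_smul_add, smul_eq_mul, invOf_eq_inv]
    field_simp
    push_cast
    ring
  rw [Nat.range_succ_eq_Icc_zero, sum_Icc_eq_add_sum_Icc_add _ (Nat.pos_of_ne_zero hn)] at h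
  simp only [hmid, zero_add, Nat.cast_zero, zero_div, div_self hn'.ne'] at h
  rw [sum_Icc_one_eq_sum_range]
  linarith

theorem ConvexOn.interior_rule_le_midpoint_rule (hf : ConvexOn ℝ (Set.Icc 0 1) f) {n : ℕ}
    (hn : 3 ≤ n) :
    3 / 2 * f (1 / n) + ∑ i ∈ Icc 2 (n - 2), f (i / n) + 3 / 2 * f ((n - 1) / n) ≤
      ∑ i ∈ Icc 1 n, f ((2 * i - 1) / (2 * n)) := by
  have hn' : (3 : ℝ) ≤ n := by exact_mod_cast hn
  have hcast : ((n - 1 : ℕ) : ℝ) = n - 1 := by rw [Nat.cast_sub (by omega)]; simp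
  have h := hf.sum_map_midpoint_add_le (fun j : ℕ => (2 * (j : ℝ) + 1) / (2 * n)) (m := n - 1)
    fun j hj => by
      have hj' : (j : ℝ) ≤ n - 1 := by rw [← hcast]; exact_mod_cast hj
      exact ⟨by positivity, (div_le_one (by positivity)).2 (by linarith)⟩
  have hmid : ∀ j : ℕ,
      midpoint ℝ ((2 * (j : ℝ) + 1) / (2 * n)) ((2 * (j + 1 : ℕ) + 1) / (2 * n)) =
        (j + 1 : ℕ) / n := by
    intro j
    rw [midpoint_eq_smul_add, smul_eq_mul, invOf_eq_inv]
    field_simp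
    push_cast
    ring
  have hends : f (1 / n) + f ((n - 1) / n) ≤
      f (1 / (2 * n)) + f ((2 * (n - 1) + 1) / (2 * n)) := by
    have hpos : (0 : ℝ) < n := by linarith
    refine hf.map_add_map_le_of_add_eq ⟨by positivity, ?_⟩
      ⟨div_nonneg (by linarith) (by positivity), ?_⟩ ?_ ?_ ?_
    · rw [div_le_one (by positivity)]; linarith
    · rw [div_le_one (by positivity)]; linarith
    · rw [div_le_div_iff₀ (by positivity) hpos]; linarith
    · rw [div_le_div_iff₀ hpos (by positivity)]; nlinarith
    · field_simp; ring
  rw [Nat.sub_add_cancel (by omega : 1 ≤ n)] at h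
  simp only [hmid] at h
  rw [← sum_Icc_one_eq_sum_range (fun i : ℕ => f (i / n)),
    sum_Icc_eq_add_sum_Icc_add _ (by omega : 1 < n - 1), hcast] at h
  simp only [Nat.cast_zero, Nat.cast_one, mul_zero, zero_add, Nat.sub_sub, Nat.reduceAdd] at h
  have hodd : ∑ j ∈ range n, f ((2 * (j + 1 : ℕ) - 1) / (2 * n)) =
      ∑ j ∈ range n, f ((2 * j + 1) / (2 * n)) :=
    sum_congr rfl fun j _ => by push_cast; ring_nf
  rw [sum_Icc_one_eq_sum_range, hodd]
  linarith

end QuadratureRules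

section DiracIntegrals

variable {α E ι : Type*} [MeasurableSpace α] [MeasurableSingletonClass α] [NormedAddCommGroup E]
  [NormedSpace ℝ E] [CompleteSpace E] {f : α → E}

theorem integral_smul_dirac (c : ℝ≥0∞) (a : α) :
    ∫ x, f x ∂(c • Measure.dirac a) = c.toReal • f a := by
  rw [integral_smul_measure, integral_dirac]

theorem integral_finsetSum_smul_dirac {s : Finset ι} {w : ι → ℝ≥0∞} {x : ι → α}
    (hf : Integrable f (∑ i ∈ s, w i • Measure.dirac (x i))) :
    ∫ a, f a ∂(∑ i ∈ s, w i • Measure.dirac (x i)) = ∑ i ∈ s, (w i).toReal • f (x i) := by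
  rw [integral_finsetSum_measure (integrable_finsetSum_measure.1 hf)]
  exact sum_congr rfl fun i _ => integral_smul_dirac _ _

theorem integral_smul_dirac_add_finsetSum_add_smul_dirac {c d : ℝ≥0∞} {a b : α} {s : Finset ι}
    {w : ι → ℝ≥0∞} {x : ι → α}
    (hf : Integrable f
      (c • Measure.dirac a + ∑ i ∈ s, w i • Measure.dirac (x i) + d • Measure.dirac b)) :
    ∫ y, f y ∂(c • Measure.dirac a + ∑ i ∈ s, w i • Measure.dirac (x i) + d • Measure.dirac b) =
      c.toReal • f a + ∑ i ∈ s, (w i).toReal • f (x i) + d.toReal • f b := by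
  obtain ⟨⟨ha, hs⟩, hb⟩ := integrable_add_measure.1 hf |>.imp_left integrable_add_measure.1
  rw [integral_add_measure (ha.add_measure hs) hb, integral_add_measure ha hs, integral_smul_dirac,
    integral_smul_dirac, integral_finsetSum_smul_dirac hs]

end DiracIntegrals

/-- for the discrete measures `η`, `μ`, `ν` below, `η ≤_c μ ≤_c ν`. -/
theorem eta_mu_nu_convex_order (n : ℕ) (hn : 3 ≤ n) (ν μ η : Measure ℝ)
    (hν : ν = (1 / (2 * n) : ENNReal) • Measure.dirac (0:ℝ)
        + ∑ i ∈ Finset.Icc 1 (n - 1), (1 / n : ENNReal) • Measure.dirac ((i : ℝ) / n)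
        + (1 / (2 * n) : ENNReal) • Measure.dirac (1:ℝ))
    (hμ : μ = ∑ i ∈ Finset.Icc 1 n,
        (1 / n : ENNReal) • Measure.dirac ((2 * (i : ℝ) - 1) / (2 * n)))
    (hη : η = (3 / (2 * n) : ENNReal) • Measure.dirac ((1 : ℝ) / n)
        + ∑ i ∈ Finset.Icc 2 (n - 2), (1 / n : ENNReal) • Measure.dirac ((i : ℝ) / n)
        + (3 / (2 * n) : ENNReal) • Measure.dirac (((n : ℝ) - 1) / n)) :
    ConvexOrder η μ ∧ ConvexOrder μ ν := by
  have hinv : (0 : ℝ) ≤ 1 / n := by positivity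
  subst hν hμ hη
  constructor
  · intro f hf hηf hμf
    have h := mul_le_mul_of_nonneg_left
      ((hf.subset (subset_univ _) (convex_Icc 0 1)).interior_rule_le_midpoint_rule hn) hinv
    rw [integral_smul_dirac_add_finsetSum_add_smul_dirac hηf, integral_finsetSum_smul_dirac hμf]
    simp only [toReal_div, toReal_one, toReal_ofNat, toReal_mul, toReal_natCast, smul_eq_mul,
      ← mul_sum]
    exact Eq.trans_le (by ring) h
  · intro f hf hμf hνf
    have h := mul_le_mul_of_nonneg_left
      ((hf.subset (subset_univ _) (convex_Icc 0 1)).midpoint_rule_le_trapezoid_rule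
        (by omega : n ≠ 0)) hinv
    rw [integral_smul_dirac_add_finsetSum_add_smul_dirac hνf, integral_finsetSum_smul_dirac hμf]
    simp only [toReal_div, toReal_one, toReal_ofNat, toReal_mul, toReal_natCast, smul_eq_mul,
      ← mul_sum]
    exact h.trans_eq (by ring)

end
end

section
/- For an integer n ≥ 3 and p ∈ [1,∞), let ν := (1/(2n))δ_0 + (1/n)·Σ_{i=1}^{n−1} δ_{i/n} + (1/(2n))δ_1, μ := (1/n)·Σ_{i=1}^{n} δ_{(2i−1)/(2n)}, and η := (3/(2n))δ_{1/n} + (1/n)·Σ_{i=2}^{n−2} δ_{i/n} + (3/(2n))δ_{(n−1)/n}. Then W_p(μ,ν) = W_p(η,μ) = 1/(2n) and W_p(η,ν) = n^{−1−1/p}, so that W_p(μ,ν)/W_p(η,ν) = n^{1/p}/2. Consequently (since η ≤_c μ ≤_c ν, so μ ∨_c ν = ν and μ ∨_c η = μ, and μ ∧_c ν = μ and μ ∧_c η = η), the convex-order lattice operations ∧_c and ∨_c are not Lipschitz continuous with respect to W_p. -/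
open MeasureTheory Filter Set

noncomputable section

open scoped ENNReal Finset

/-! Each of ν, μ, η is the empirical measure of `2n` sorted atoms of mass `1/(2n)`: the `j`-th
atom is `⌈j/2⌉/n` for ν, `(2⌊j/2⌋+1)/(2n)` for μ, and `⌈j/2⌉/n` clamped to `[1/n, (n-1)/n]`
for η. The quantile function of the empirical measure of sorted atoms `x₀ ≤ … ≤ x_{N-1}` is
`u ↦ x_{⌈Nu⌉-1}`, so `W_p^p` between two such measures is the mean of `|x_k - y_k|^p`. The
atoms of μ and ν, and of η and μ, are all at distance exactly `1/(2n)`, while those of η and ν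
differ only at the first and the last index, by `1/n`. -/

theorem quantile_eq_of_lt_of_le {μ : Measure ℝ} {u a : ℝ} (ha : μ (Iio a) ≠ ∞)
    (hlt : (μ (Iio a)).toReal < u) (hle : u ≤ (μ (Iic a)).toReal) :
    quantile μ u = a := by
  refine IsLeast.csInf_eq ⟨hle, fun x hx => ?_⟩
  by_contra! hxa
  have : (μ (Iic x)).toReal ≤ (μ (Iio a)).toReal :=
    ENNReal.toReal_mono ha (measure_mono (Iic_subset_Iio.mpr hxa))
  exact absurd (hx.trans this) (not_le.mpr hlt)

theorem natCeil_mul_eq_add_one_iff {N : ℕ} (hN : 0 < N) (k : ℕ) (u : ℝ) :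
    ⌈N * u⌉₊ = k + 1 ↔ u ∈ Ioc ((k : ℝ) / N) ((k + 1) / N) := by
  have hN' : (0 : ℝ) < N := by exact_mod_cast hN
  rw [Nat.ceil_eq_iff (by omega), mem_Ioc, div_lt_iff₀' hN', le_div_iff₀' hN']
  push_cast
  simp

theorem iUnion_Ioc_div_natCast {N : ℕ} (hN : 0 < N) :
    ⋃ k ∈ Finset.range N, Ioc ((k : ℝ) / N) ((k + 1) / N) = Ioc 0 1 := by
  have hN' : (0 : ℝ) < N := by exact_mod_cast hN
  ext u
  simp only [mem_iUnion, Finset.mem_range, exists_prop, ← natCeil_mul_eq_add_one_iff hN]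
  constructor
  · rintro ⟨k, hk, hu⟩
    rw [natCeil_mul_eq_add_one_iff hN, mem_Ioc] at hu
    refine ⟨lt_of_le_of_lt (by positivity) hu.1, hu.2.trans ?_⟩
    rw [div_le_one hN']
    exact_mod_cast hk
  · rintro ⟨hu0, hu1⟩
    have hpos : 0 < ⌈N * u⌉₊ := Nat.ceil_pos.mpr (by positivity)
    have hle : ⌈N * u⌉₊ ≤ N := Nat.ceil_le.mpr (by nlinarith)
    exact ⟨⌈N * u⌉₊ - 1, by omega, by omega⟩

theorem integral_comp_ceil {N : ℕ} (hN : 0 < N) (g : ℕ → ℝ) :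
    ∫ u in Ioo (0:ℝ) 1, g (⌈N * u⌉₊ - 1) = (∑ k ∈ Finset.range N, g k) / N := by
  have hN' : (0 : ℝ) < N := by exact_mod_cast hN
  have hpiece : ∀ k, EqOn (fun u : ℝ => g (⌈N * u⌉₊ - 1)) (fun _ => g k)
      (Ioc ((k : ℝ) / N) ((k + 1) / N)) := fun k u hu => by
    simp [(natCeil_mul_eq_add_one_iff hN k u).mpr hu]
  rw [← integral_Ioc_eq_integral_Ioo, ← iUnion_Ioc_div_natCast hN,
    integral_biUnion_finset _ (fun _ _ => measurableSet_Ioc)]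
  · rw [Finset.sum_div]
    refine Finset.sum_congr rfl fun k _ => ?_
    rw [setIntegral_congr_fun measurableSet_Ioc (hpiece k), setIntegral_const,
      Real.volume_real_Ioc_of_le (by gcongr; linarith), smul_eq_mul]
    field_simp
    ring
  · intro k _ l _ hkl
    refine Set.disjoint_left.mpr fun u hk hl => hkl ?_
    rw [← natCeil_mul_eq_add_one_iff hN] at hk hl
    omega
  · exact fun k _ => (integrableOn_const (by simp)).congr_fun (hpiece k).symm measurableSet_Ioc

def empiricalMeasure (N : ℕ) (x : ℕ → ℝ) : Measure ℝ :=
  (N : ℝ≥0∞)⁻¹ • ∑ j ∈ Finset.range N, Measure.dirac (x j)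

open Classical in
theorem empiricalMeasure_apply (N : ℕ) (x : ℕ → ℝ) (A : Set ℝ) :
    empiricalMeasure N x A = #{j ∈ Finset.range N | x j ∈ A} / N := by
  simp only [empiricalMeasure, Measure.smul_apply, Measure.finsetSum_apply,
    Measure.dirac_apply, indicator_apply, Pi.one_apply, Finset.sum_boole, smul_eq_mul]
  rw [ENNReal.div_eq_inv_mul]

open Classical in
theorem empiricalMeasure_toReal_apply (N : ℕ) (x : ℕ → ℝ) (A : Set ℝ) :
    (empiricalMeasure N x A).toReal = #{j ∈ Finset.range N | x j ∈ A} / N := by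
  rw [empiricalMeasure_apply, ENNReal.toReal_div]
  simp

theorem quantile_empiricalMeasure {N : ℕ} (hN : 0 < N) {x : ℕ → ℝ} (hx : Monotone x) {u : ℝ}
    (hu : u ∈ Ioc 0 1) : quantile (empiricalMeasure N x) u = x (⌈N * u⌉₊ - 1) := by
  classical
  set k := ⌈N * u⌉₊ - 1
  have hN' : (0 : ℝ) < N := by exact_mod_cast hN
  have hk : (k : ℝ) < N * u ∧ N * u ≤ k + 1 := by
    have hpos : 0 < ⌈N * u⌉₊ := Nat.ceil_pos.mpr (mul_pos hN' hu.1)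
    simpa using (Nat.ceil_eq_iff (n := k + 1) (a := N * u) (by omega)).mp (by omega)
  have hkN : k < N := by
    have : (k : ℝ) < N := hk.1.trans_le (by nlinarith [hu.2])
    exact_mod_cast this
  apply quantile_eq_of_lt_of_le
  · rw [empiricalMeasure_apply]
    exact ENNReal.div_ne_top (ENNReal.natCast_ne_top _) (by simpa using hN.ne')
  · rw [empiricalMeasure_toReal_apply, div_lt_iff₀ hN']
    calc (#{j ∈ Finset.range N | x j ∈ Iio (x k)} : ℝ) ≤ k := by
          have : {j ∈ Finset.range N | x j ∈ Iio (x k)} ⊆ Finset.range k := fun j hj => by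
            simp only [Finset.mem_filter, mem_Iio] at hj
            exact Finset.mem_range.mpr (lt_of_not_ge fun hkj => (hx hkj).not_gt hj.2)
          exact_mod_cast (Finset.card_le_card this).trans_eq (Finset.card_range k)
      _ < u * N := by linarith [hk.1]
  · rw [empiricalMeasure_toReal_apply, le_div_iff₀ hN']
    calc u * N ≤ k + 1 := by linarith [hk.2]
      _ ≤ #{j ∈ Finset.range N | x j ∈ Iic (x k)} := by
          have : Finset.range (k + 1) ⊆ {j ∈ Finset.range N | x j ∈ Iic (x k)} := fun j hj => by
            simp only [Finset.mem_filter, Finset.mem_range, mem_Iic] at hj ⊢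
            exact ⟨by omega, hx (by omega)⟩
          exact_mod_cast (Finset.card_range (k + 1)).symm.trans_le (Finset.card_le_card this)

theorem Wp_empiricalMeasure {N : ℕ} (hN : 0 < N) {x y : ℕ → ℝ} (hx : Monotone x)
    (hy : Monotone y) (p : ℝ) :
    Wp p (empiricalMeasure N x) (empiricalMeasure N y)
      = ((∑ k ∈ Finset.range N, |x k - y k| ^ p) / N) ^ (1 / p) := by
  rw [Wp, ← integral_comp_ceil hN (fun k => |x k - y k| ^ p)]
  congr 1
  refine setIntegral_congr_fun measurableSet_Ioo fun u hu => ?_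
  simp only [quantile_empiricalMeasure hN hx ⟨hu.1, hu.2.le⟩,
    quantile_empiricalMeasure hN hy ⟨hu.1, hu.2.le⟩]

theorem Wp_empiricalMeasure_of_abs_sub_eq {N : ℕ} (hN : 0 < N) {x y : ℕ → ℝ}
    (hx : Monotone x) (hy : Monotone y) {c : ℝ} (hc : 0 ≤ c)
    (hxy : ∀ k < N, |x k - y k| = c) {p : ℝ} (hp : p ≠ 0) :
    Wp p (empiricalMeasure N x) (empiricalMeasure N y) = c := by
  rw [Wp_empiricalMeasure hN hx hy, Finset.sum_congr rfl fun k hk => by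
    rw [hxy k (Finset.mem_range.mp hk)], Finset.sum_const, Finset.card_range, nsmul_eq_mul,
    mul_div_cancel_left₀ _ (by positivity), ← Real.rpow_mul hc, mul_one_div_cancel hp,
    Real.rpow_one]

theorem Finset.sum_range_two_mul_comp_div_two {M : Type*} [AddCommMonoid M] (f : ℕ → M)
    (m : ℕ) : ∑ j ∈ Finset.range (2 * m), f (j / 2) = 2 • ∑ k ∈ Finset.range m, f k := by
  induction m with
  | zero => simp
  | succ m ih =>
    rw [show 2 * (m + 1) = 2 * m + 1 + 1 by ring, Finset.sum_range_succ, Finset.sum_range_succ,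
      ih, Finset.sum_range_succ, show (2 * m + 1) / 2 = m by omega,
      show 2 * m / 2 = m by omega, smul_add, two_nsmul (f m), add_assoc]

theorem Finset.sum_Icc_eq_sum_range {M : Type*} [AddCommMonoid M] (f : ℕ → M) (a b : ℕ) :
    ∑ i ∈ Finset.Icc a b, f i = ∑ k ∈ Finset.range (b + 1 - a), f (a + k) := by
  rw [← Finset.Ico_add_one_right_eq_Icc, Finset.sum_Ico_eq_sum_range]

theorem ENNReal.natCast_two_mul_inv_mul_two (n : ℕ) : ((2 * n : ℕ) : ℝ≥0∞)⁻¹ * 2 = 1 / n := by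
  rw [one_div, Nat.cast_mul, ENNReal.mul_inv (by simp) (by simp), mul_comm, ← mul_assoc,
    Nat.cast_ofNat, ENNReal.mul_inv_cancel two_ne_zero ENNReal.ofNat_ne_top, one_mul]

def atomsNu (n j : ℕ) : ℝ := ((j + 1) / 2 : ℕ) / n

def atomsMu (n j : ℕ) : ℝ := (2 * (j / 2 : ℕ) + 1) / (2 * n)

def atomsEta (n j : ℕ) : ℝ := (max 1 (min ((j + 1) / 2) (n - 1)) : ℕ) / n

theorem atomsNu_monotone (n : ℕ) : Monotone (atomsNu n) := fun _ _ _ => by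
  unfold atomsNu; gcongr

theorem atomsMu_monotone (n : ℕ) : Monotone (atomsMu n) := fun _ _ _ => by
  unfold atomsMu; gcongr

theorem atomsEta_monotone (n : ℕ) : Monotone (atomsEta n) := fun _ _ _ => by
  unfold atomsEta; gcongr

theorem empiricalMeasure_atomsNu {n : ℕ} (hn : 1 ≤ n) :
    empiricalMeasure (2 * n) (atomsNu n) = (1 / (2 * n) : ENNReal) • Measure.dirac (0:ℝ)
        + ∑ i ∈ Finset.Icc 1 (n - 1), (1 / n : ENNReal) • Measure.dirac ((i : ℝ) / n)
        + (1 / (2 * n) : ENNReal) • Measure.dirac (1:ℝ) := by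
  obtain ⟨m, rfl⟩ : ∃ m, n = m + 1 := ⟨n - 1, by omega⟩
  set S := ∑ k ∈ Finset.range m, Measure.dirac (((1 + k : ℕ) : ℝ) / (m + 1 : ℕ))
  have hmid : ∑ j ∈ Finset.range (2 * m), Measure.dirac (atomsNu (m + 1) (j + 1)) = 2 • S := by
    rw [← Finset.sum_range_two_mul_comp_div_two]
    refine Finset.sum_congr rfl fun j _ => ?_
    rw [atomsNu, show (j + 1 + 1) / 2 = 1 + j / 2 by omega]
  have hlast : atomsNu (m + 1) (2 * m + 1) = 1 := by
    rw [atomsNu, show (2 * m + 1 + 1) / 2 = m + 1 by omega, div_self (by positivity)]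
  have hsum : ∑ j ∈ Finset.range (2 * (m + 1)), Measure.dirac (atomsNu (m + 1) j)
      = Measure.dirac 0 + 2 • S + Measure.dirac 1 := by
    rw [show 2 * (m + 1) = 2 * m + 1 + 1 by ring, Finset.sum_range_succ, Finset.sum_range_succ',
      hmid, hlast]
    simp only [atomsNu, zero_add, Nat.reduceDiv, CharP.cast_eq_zero, zero_div]
    abel
  rw [empiricalMeasure, hsum, smul_add, smul_add, ← Nat.cast_smul_eq_nsmul ℝ≥0∞, smul_smul,
    Nat.cast_ofNat, ENNReal.natCast_two_mul_inv_mul_two, ← Finset.smul_sum,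
    Finset.sum_Icc_eq_sum_range, show m + 1 - 1 + 1 - 1 = m by omega, one_div (2 * _ : ℝ≥0∞),
    Nat.cast_mul, Nat.cast_ofNat]

theorem empiricalMeasure_atomsMu (n : ℕ) :
    empiricalMeasure (2 * n) (atomsMu n) = ∑ i ∈ Finset.Icc 1 n,
        (1 / n : ENNReal) • Measure.dirac ((2 * (i : ℝ) - 1) / (2 * n)) := by
  unfold empiricalMeasure atomsMu
  rw [Finset.sum_range_two_mul_comp_div_two
    (fun k => Measure.dirac ((2 * (k : ℝ) + 1) / (2 * n))), ← Nat.cast_smul_eq_nsmul ℝ≥0∞,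
    smul_smul, Nat.cast_ofNat, ENNReal.natCast_two_mul_inv_mul_two, ← Finset.smul_sum,
    Finset.sum_Icc_eq_sum_range, Nat.add_sub_cancel]
  congr 1
  refine Finset.sum_congr rfl fun k _ => ?_
  push_cast
  ring_nf

theorem empiricalMeasure_atomsEta {n : ℕ} (hn : 3 ≤ n) :
    empiricalMeasure (2 * n) (atomsEta n) =
      (3 / (2 * n) : ENNReal) • Measure.dirac ((1 : ℝ) / n)
        + ∑ i ∈ Finset.Icc 2 (n - 2), (1 / n : ENNReal) • Measure.dirac ((i : ℝ) / n)
        + (3 / (2 * n) : ENNReal) • Measure.dirac (((n : ℝ) - 1) / n) := by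
  obtain ⟨m, rfl⟩ : ∃ m, n = m + 3 := ⟨n - 3, by omega⟩
  set a := Measure.dirac ((1 : ℝ) / (m + 3 : ℕ))
  set b := Measure.dirac ((((m + 3 : ℕ) : ℝ) - 1) / (m + 3 : ℕ))
  set S := ∑ k ∈ Finset.range m, Measure.dirac (((2 + k : ℕ) : ℝ) / (m + 3 : ℕ))
  have hfirst : ∀ j ≤ 2, atomsEta (m + 3) j = 1 / (m + 3 : ℕ) := fun j hj => by
    rw [atomsEta, show max 1 (min ((j + 1) / 2) (m + 3 - 1)) = 1 by omega, Nat.cast_one]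
  have hlast : ∀ j, 2 * m + 3 ≤ j →
      atomsEta (m + 3) j = (((m + 3 : ℕ) : ℝ) - 1) / (m + 3 : ℕ) := fun j hj => by
    rw [atomsEta, show max 1 (min ((j + 1) / 2) (m + 3 - 1)) = m + 2 by omega]
    push_cast
    ring
  have hmid : ∑ j ∈ Finset.range (2 * m), Measure.dirac (atomsEta (m + 3) (j + 1 + 1 + 1))
      = 2 • S := by
    rw [← Finset.sum_range_two_mul_comp_div_two]
    refine Finset.sum_congr rfl fun j hj => ?_
    rw [Finset.mem_range] at hj
    rw [atomsEta, show max 1 (min ((j + 1 + 1 + 1 + 1) / 2) (m + 3 - 1)) = 2 + j / 2 by omega]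
  have hsum : ∑ j ∈ Finset.range (2 * (m + 3)), Measure.dirac (atomsEta (m + 3) j)
      = 3 • a + 2 • S + 3 • b := by
    rw [show 2 * (m + 3) = 2 * m + 1 + 1 + 1 + 1 + 1 + 1 by ring]
    simp only [Finset.sum_range_succ _ (2 * m + 1 + 1 + 1 + 1 + 1),
      Finset.sum_range_succ _ (2 * m + 1 + 1 + 1 + 1), Finset.sum_range_succ _ (2 * m + 1 + 1 + 1),
      Finset.sum_range_succ' _ (2 * m + 1 + 1), Finset.sum_range_succ' _ (2 * m + 1),
      Finset.sum_range_succ' _ (2 * m), hmid]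
    rw [hfirst 0 (by omega), hfirst 1 (by omega), hfirst 2 (by omega), hlast _ (by omega),
      hlast _ (by omega), hlast _ (by omega)]
    abel
  have hthree : ((2 * (m + 3) : ℕ) : ℝ≥0∞)⁻¹ * 3 = 3 / (2 * (m + 3 : ℕ)) := by
    rw [mul_comm, ← div_eq_mul_inv]
    push_cast
    rfl
  rw [empiricalMeasure, hsum, smul_add, smul_add, ← Nat.cast_smul_eq_nsmul ℝ≥0∞ 3 a,
    ← Nat.cast_smul_eq_nsmul ℝ≥0∞ 2, ← Nat.cast_smul_eq_nsmul ℝ≥0∞ 3 b, smul_smul, smul_smul,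
    smul_smul, Nat.cast_ofNat, Nat.cast_ofNat, hthree, ENNReal.natCast_two_mul_inv_mul_two,
    ← Finset.smul_sum, Finset.sum_Icc_eq_sum_range, show m + 3 - 2 + 1 - 2 = m by omega]

theorem abs_odd_div_sub_div (n a b : ℕ) (h : b = a ∨ b = a + 1) :
    |(2 * a + 1 : ℝ) / (2 * n) - b / n| = 1 / (2 * n) := by
  rw [← mul_div_mul_left (b : ℝ) n two_ne_zero, ← sub_div, abs_div,
    abs_of_nonneg (by positivity : (0 : ℝ) ≤ 2 * n)]
  congr 1
  rcases h with rfl | rfl <;> push_cast <;> ring_nf <;> simp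

theorem abs_atomsMu_sub_atomsNu (n k : ℕ) : |atomsMu n k - atomsNu n k| = 1 / (2 * n) :=
  abs_odd_div_sub_div n _ _ (by omega)

theorem abs_atomsEta_sub_atomsMu {n k : ℕ} (hk : k < 2 * n) :
    |atomsEta n k - atomsMu n k| = 1 / (2 * n) := by
  rw [abs_sub_comm]
  exact abs_odd_div_sub_div n _ _ (by omega)

theorem sum_abs_atomsEta_sub_atomsNu_rpow {n : ℕ} (hn : 2 ≤ n) {p : ℝ} (hp : p ≠ 0) :
    ∑ k ∈ Finset.range (2 * n), |atomsEta n k - atomsNu n k| ^ p = 2 * (1 / n : ℝ) ^ p := by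
  obtain ⟨m, rfl⟩ : ∃ m, n = m + 1 := ⟨n - 1, by omega⟩
  have hmid : ∀ j ∈ Finset.range (2 * m),
      |atomsEta (m + 1) (j + 1) - atomsNu (m + 1) (j + 1)| ^ p = 0 := fun j hj => by
    rw [Finset.mem_range] at hj
    rw [atomsEta, atomsNu,
      show max 1 (min ((j + 1 + 1) / 2) (m + 1 - 1)) = (j + 1 + 1) / 2 by omega,
      sub_self, abs_zero, Real.zero_rpow hp]
  have hfirst : atomsEta (m + 1) 0 - atomsNu (m + 1) 0 = 1 / (m + 1 : ℕ) := by
    simp [atomsEta, atomsNu]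
  have hlast : atomsEta (m + 1) (2 * m + 1) - atomsNu (m + 1) (2 * m + 1)
      = -(1 / (m + 1 : ℕ)) := by
    rw [atomsEta, atomsNu, show max 1 (min ((2 * m + 1 + 1) / 2) (m + 1 - 1)) = m by omega,
      show (2 * m + 1 + 1) / 2 = m + 1 by omega]
    field_simp
    push_cast
    ring
  rw [show 2 * (m + 1) = 2 * m + 1 + 1 by ring, Finset.sum_range_succ, Finset.sum_range_succ',
    Finset.sum_eq_zero hmid, hfirst, hlast, abs_neg, abs_of_nonneg (by positivity)]
  ring

theorem Wp_atomsEta_atomsNu {n : ℕ} (hn : 2 ≤ n) {p : ℝ} (hp : p ≠ 0) :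
    Wp p (empiricalMeasure (2 * n) (atomsEta n)) (empiricalMeasure (2 * n) (atomsNu n))
      = (n : ℝ) ^ (-(1 + 1 / p)) := by
  have hn' : (0 : ℝ) < n := by positivity
  have hpow : 2 * (1 / n : ℝ) ^ p / (2 * n : ℕ) = (n : ℝ) ^ (-(p + 1)) := by
    rw [one_div, Real.inv_rpow hn'.le, neg_add, Real.rpow_add hn', Real.rpow_neg hn'.le,
      Real.rpow_neg_one]
    push_cast
    field_simp
  rw [Wp_empiricalMeasure (by omega) (atomsEta_monotone n) (atomsNu_monotone n),
    sum_abs_atomsEta_sub_atomsNu_rpow hn hp, hpow, ← Real.rpow_mul hn'.le]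
  congr 1
  field_simp

/-- for the discrete measures `η`, `μ`, `ν` below,
`W_p(μ,ν) = W_p(η,μ) = 1/(2n)`, `W_p(η,ν) = n^{-1-1/p}` and
`W_p(μ,ν)/W_p(η,ν) = n^{1/p}/2`, showing that the convex-order lattice operations are not
Lipschitz continuous w.r.t. `W_p`. -/
theorem lattice_not_lipschitz (n : ℕ) (hn : 3 ≤ n) (p : ℝ) (hp : 1 ≤ p)
    (ν μ η : Measure ℝ)
    (hν : ν = (1 / (2 * n) : ENNReal) • Measure.dirac (0:ℝ)
        + ∑ i ∈ Finset.Icc 1 (n - 1), (1 / n : ENNReal) • Measure.dirac ((i : ℝ) / n)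
        + (1 / (2 * n) : ENNReal) • Measure.dirac (1:ℝ))
    (hμ : μ = ∑ i ∈ Finset.Icc 1 n,
        (1 / n : ENNReal) • Measure.dirac ((2 * (i : ℝ) - 1) / (2 * n)))
    (hη : η = (3 / (2 * n) : ENNReal) • Measure.dirac ((1 : ℝ) / n)
        + ∑ i ∈ Finset.Icc 2 (n - 2), (1 / n : ENNReal) • Measure.dirac ((i : ℝ) / n)
        + (3 / (2 * n) : ENNReal) • Measure.dirac (((n : ℝ) - 1) / n)) :
    Wp p μ ν = 1 / (2 * n) ∧ Wp p η μ = 1 / (2 * n) ∧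
    Wp p η ν = (n : ℝ) ^ (-(1 + 1 / p)) ∧
    Wp p μ ν / Wp p η ν = (n : ℝ) ^ (1 / p) / 2 := by
  rw [← empiricalMeasure_atomsNu (n := n) (by omega)] at hν
  rw [← empiricalMeasure_atomsMu] at hμ
  rw [← empiricalMeasure_atomsEta hn] at hη
  subst hν hμ hη
  have hp0 : p ≠ 0 := by positivity
  have h2n : 0 < 2 * n := by omega
  have hμν := Wp_empiricalMeasure_of_abs_sub_eq h2n (atomsMu_monotone n) (atomsNu_monotone n)
    (by positivity) (fun k _ => abs_atomsMu_sub_atomsNu n k) hp0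
  have hημ := Wp_empiricalMeasure_of_abs_sub_eq h2n (atomsEta_monotone n) (atomsMu_monotone n)
    (by positivity) (fun k hk => abs_atomsEta_sub_atomsMu hk) hp0
  have hην := Wp_atomsEta_atomsNu (n := n) (by omega) hp0
  refine ⟨hμν, hημ, hην, ?_⟩
  have hn' : (0 : ℝ) < n := by positivity
  rw [hμν, hην, Real.rpow_neg hn'.le, Real.rpow_add hn', Real.rpow_one]
  field_simp

end
end
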